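/- arXiv:2304.07351 — 5 statements merged into one kernel-verified Lean document; each statement's English description precedes it below -/
import Mathlib

section
/- Let $F$ be a field, let $n \ge 3$, let $1 \le i \le n-2$, and let $z_1,\dots,z_n \in F$ be pairwise distinct. Then $\sum_{\gamma \in (1,\dots,i) \,\shuffle\, (i+1,\dots,n-1)} \mathrm{PT}(\gamma_1,\dots,\gamma_{n-1},n) = 0$, where the sum runs over all shuffles $\gamma$ of the ordered lists $(1,\dots,i)$ and $(i+1,\dots,n-1)$. (This is the shuffle identity for $k=2$ Parke-Taylor factors, the dual form of the degenerated Kleiss-Kuijf relation.) -/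
/-- The Parke-Taylor factor of a list of labels `l`, with points `z`:
`∏ m, (z l_m - z l_{m+1})⁻¹`, indices read cyclically. -/
noncomputable def PTl {F : Type*} [Field F] (z : ℕ → F) (l : List ℕ) : F :=
  ∏ m : Fin l.length, (z (l.get m) - z (l.get (finRotate l.length m)))⁻¹

/-!
`PT(γ, n)` is the closed chain `n → γ₁ → ⋯ → γ_{n-1} → n`. For open chains
`C(a, σ, b) = ∏ (z_{σ_k} - z_{σ_{k+1}})⁻¹` along `a, σ, b` (`ptChain z a (σ ++ [b])`),
the shuffle sum factorises:
`∑_{σ ∈ α ⧢ β} C(a, σ, b) = (z_a - z_b) C(a, α, b) C(a, β, b)`.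
Peeling off the first letter of a shuffle reduces this to the partial-fraction identity
`(z_x - z_b)/((z_a - z_x)(z_x - z_y)) + (z_y - z_b)/((z_a - z_y)(z_y - z_x))
  = (z_a - z_b)/((z_a - z_x)(z_a - z_y))`.
For nonempty `α` and `β` one peeling step already moves the start away from `b`, so the
identity also holds for `a = b`, where its right-hand side vanishes.
-/

open List

section Shuffles

variable {ι : Type*}

def shuffles : List ι → List ι → List (List ι)
  | [], l => [l]
  | l, [] => [l]
  | x :: xs, y :: ys =>
      (shuffles xs (y :: ys)).map (x :: ·) ++ (shuffles (x :: xs) ys).map (y :: ·)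

@[simp] theorem shuffles_nil_left (l : List ι) : shuffles [] l = [l] := by
  rw [shuffles]

@[simp] theorem shuffles_nil_right (l : List ι) : shuffles l [] = [l] := by
  cases l with
  | nil => rw [shuffles]
  | cons x xs => rw [shuffles.eq_2 _ (by simp)]

theorem shuffles_cons_cons (x y : ι) (xs ys : List ι) :
    shuffles (x :: xs) (y :: ys) =
      (shuffles xs (y :: ys)).map (x :: ·) ++ (shuffles (x :: xs) ys).map (y :: ·) := by
  rw [shuffles]

theorem perm_and_sublists_of_mem_shuffles {α β γ : List ι} (h : γ ∈ shuffles α β) :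
    γ ~ α ++ β ∧ α <+ γ ∧ β <+ γ := by
  induction α, β using shuffles.induct generalizing γ with
  | case1 l => simp_all
  | case2 l _ => simp_all
  | case3 x xs y ys ihx ihy =>
    simp only [shuffles_cons_cons, mem_append, mem_map] at h
    rcases h with ⟨σ, hσ, rfl⟩ | ⟨σ, hσ, rfl⟩
    · obtain ⟨hperm, hxs, hys⟩ := ihx hσ
      exact ⟨hperm.cons x, hxs.cons_cons x, hys.cons x⟩
    · obtain ⟨hperm, hxs, hys⟩ := ihy hσ
      exact ⟨(hperm.cons y).trans perm_middle.symm, hxs.cons y, hys.cons_cons y⟩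

theorem List.Sublist.exists_eq_cons_of_head_mem {c : ι} {α γ : List ι} (hγ : (c :: γ).Nodup)
    (hα : α <+ c :: γ) (hc : c ∈ α) : ∃ α', α = c :: α' ∧ α' <+ γ := by
  rcases sublist_cons_iff.mp hα with h | h
  · exact absurd (h.subset hc) (nodup_cons.mp hγ).1
  · exact h

theorem List.Sublist.of_cons_of_notMem {c : ι} {β γ : List ι} (hβ : β <+ c :: γ) (hc : c ∉ β) :
    β <+ γ := by
  rcases sublist_cons_iff.mp hβ with h | ⟨r, rfl, _⟩
  · exact h
  · exact absurd mem_cons_self hc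

theorem mem_shuffles_of_perm {α β γ : List ι} (hαβ : (α ++ β).Nodup) (hperm : γ ~ α ++ β)
    (hα : α <+ γ) (hβ : β <+ γ) : γ ∈ shuffles α β := by
  induction α, β using shuffles.induct generalizing γ with
  | case1 l => simpa using (hβ.eq_of_length hperm.length_eq.symm).symm
  | case2 l _ => simpa using (hα.eq_of_length (by simpa using hperm.length_eq.symm)).symm
  | case3 x xs y ys ihx ihy =>
    cases γ with
    | nil => simp at hperm
    | cons c γ =>
      have hγ : (c :: γ).Nodup := hperm.nodup_iff.mpr hαβ
      have hdisj := disjoint_of_nodup_append hαβ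
      rw [shuffles_cons_cons, mem_append, mem_map, mem_map]
      rcases mem_append.mp (hperm.subset mem_cons_self) with hc | hc
      · obtain ⟨xs', hx, hxs⟩ := Sublist.exists_eq_cons_of_head_mem hγ hα hc
        obtain ⟨rfl, rfl⟩ := cons_eq_cons.mp hx
        refine .inl ⟨γ, ihx (nodup_cons.mp hαβ).2 hperm.cons_inv hxs
          (Sublist.of_cons_of_notMem hβ fun h => hdisj hc h), rfl⟩
      · obtain ⟨ys', hy, hys⟩ := Sublist.exists_eq_cons_of_head_mem hγ hβ hc
        obtain ⟨rfl, rfl⟩ := cons_eq_cons.mp hy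
        refine .inr ⟨γ, ihy ?_ ?_ (Sublist.of_cons_of_notMem hα fun h => hdisj h hc) hys, rfl⟩
        · exact (perm_middle.nodup_iff.mp hαβ).of_cons
        · exact (hperm.trans perm_middle).cons_inv

theorem mem_shuffles {α β γ : List ι} (hαβ : (α ++ β).Nodup) :
    γ ∈ shuffles α β ↔ γ ~ α ++ β ∧ α <+ γ ∧ β <+ γ :=
  ⟨perm_and_sublists_of_mem_shuffles, fun ⟨hperm, hα, hβ⟩ => mem_shuffles_of_perm hαβ hperm hα hβ⟩

theorem nodup_shuffles {α β : List ι} (h : α.Disjoint β) : (shuffles α β).Nodup := by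
  induction α, β using shuffles.induct with
  | case1 l => simp
  | case2 l _ => simp
  | case3 x xs y ys ihx ihy =>
    rw [shuffles_cons_cons, nodup_append]
    refine ⟨(ihx ?_).map cons_injective, (ihy ?_).map cons_injective, ?_⟩
    · exact disjoint_of_disjoint_cons_left h
    · exact disjoint_of_disjoint_cons_right h
    · simp only [mem_map]
      rintro _ ⟨σ, -, rfl⟩ _ ⟨τ, -, rfl⟩ he
      exact h mem_cons_self ((cons_eq_cons.mp he).1 ▸ mem_cons_self)

theorem toFinset_shuffles [DecidableEq ι] {α β : List ι} (hαβ : (α ++ β).Nodup) :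
    (shuffles α β).toFinset = (α ++ β).permutations.toFinset.filter (fun γ => α <+ γ ∧ β <+ γ) := by
  ext γ
  simp [mem_shuffles hαβ]

end Shuffles

theorem val_finRotate {n : ℕ} (m : Fin n) :
    (finRotate n m : ℕ) = if (m : ℕ) + 1 = n then 0 else (m : ℕ) + 1 := by
  cases n with
  | zero => exact m.elim0
  | succ n =>
    rw [coe_finRotate]
    simp [Fin.ext_iff]

theorem getElem_cons_finRotate {α : Type*} (l : List α) (b : α) (m : Fin (l ++ [b]).length) :
    (b :: (l ++ [b]))[(finRotate _ m : ℕ)] = (l ++ [b])[(m : ℕ)] := by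
  have hm := m.2
  simp only [length_append, length_singleton] at hm
  simp only [val_finRotate, length_append, length_singleton]
  split_ifs with h
  · simp [show (m : ℕ) = l.length by omega]
  · simp [getElem_append]

section Chain

variable {ι F : Type*} [Field F] (z : ι → F)

def ptChain : ι → List ι → F
  | _, [] => 1
  | a, c :: l => (z a - z c)⁻¹ * ptChain c l

@[simp] theorem ptChain_nil (a : ι) : ptChain z a [] = 1 := rfl
@[simp] theorem ptChain_cons (a c : ι) (l : List ι) :
    ptChain z a (c :: l) = (z a - z c)⁻¹ * ptChain z c l := rfl

theorem ptChain_eq_prod (a : ι) (l : List ι) :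
    ptChain z a l = ∏ m : Fin l.length, (z (a :: l)[(m : ℕ)] - z l[m])⁻¹ := by
  induction l generalizing a with
  | nil => simp
  | cons c l ih => simp [ih, Fin.prod_univ_succ, mul_comm]

theorem PTl_append_singleton (z : ℕ → F) (l : List ℕ) (b : ℕ) :
    PTl z (l ++ [b]) = ptChain z b (l ++ [b]) := by
  rw [PTl, ptChain_eq_prod]
  exact Fintype.prod_equiv (finRotate _) _ _ fun m => by rw [getElem_cons_finRotate]; rfl

theorem sum_shuffles_cons_cons_ptChain {a b x y : ι} {xs ys : List ι}
    (ha : z a ∉ (x :: xs ++ y :: ys).map z) (hb : ((x :: xs ++ y :: ys ++ [b]).map z).Nodup)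
    (ihx : ((x :: (xs ++ y :: ys ++ [b])).map z).Nodup →
      ((shuffles xs (y :: ys)).map fun σ => ptChain z x (σ ++ [b])).sum =
        (z x - z b) * ptChain z x (xs ++ [b]) * ptChain z x (y :: ys ++ [b]))
    (ihy : ((y :: (x :: xs ++ ys ++ [b])).map z).Nodup →
      ((shuffles (x :: xs) ys).map fun σ => ptChain z y (σ ++ [b])).sum =
        (z y - z b) * ptChain z y (x :: xs ++ [b]) * ptChain z y (ys ++ [b])) :
    ((shuffles (x :: xs) (y :: ys)).map fun σ => ptChain z a (σ ++ [b])).sum =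
      (z a - z b) * ptChain z a (x :: xs ++ [b]) * ptChain z a (y :: ys ++ [b]) := by
  have hperm : x :: xs ++ y :: ys ++ [b] ~ y :: (x :: xs ++ ys ++ [b]) := by
    rw [append_assoc, append_assoc]
    exact perm_middle
  have hy : ((y :: (x :: xs ++ ys ++ [b])).map z).Nodup := (hperm.map z).nodup_iff.mp hb
  have hax : z a - z x ≠ 0 := sub_ne_zero.mpr fun h => ha (by simp [h])
  have hay : z a - z y ≠ 0 := sub_ne_zero.mpr fun h => ha (by simp [h])
  have hxy : z x - z y ≠ 0 := sub_ne_zero.mpr fun h => by simp [h] at hb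
  have hyx : z y - z x ≠ 0 := sub_ne_zero.mpr fun h => by simp [h] at hb
  simp only [shuffles_cons_cons, map_append, map_map, sum_append, Function.comp_def,
    cons_append, ptChain_cons, sum_map_mul_left]
  rw [ihx hb, ihy hy]
  simp only [cons_append, ptChain_cons]
  field_simp
  ring

theorem sum_shuffles_ptChain {a b : ι} {α β : List ι} (h : ((a :: (α ++ β ++ [b])).map z).Nodup) :
    ((shuffles α β).map fun σ => ptChain z a (σ ++ [b])).sum =
      (z a - z b) * ptChain z a (α ++ [b]) * ptChain z a (β ++ [b]) := by
  induction α, β using shuffles.induct generalizing a with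
  | case1 l =>
    have hab : z a - z b ≠ 0 := sub_ne_zero.mpr fun hab => by simp [hab] at h
    simp [hab]
  | case2 l _ =>
    have hab : z a - z b ≠ 0 := sub_ne_zero.mpr fun hab => by simp [hab] at h
    simp only [shuffles_nil_right, map_cons, map_nil, sum_cons, sum_nil, add_zero, nil_append,
      ptChain_cons, ptChain_nil, mul_one]
    field_simp
  | case3 x xs y ys ihx ihy =>
    refine sum_shuffles_cons_cons_ptChain z (fun hm => (nodup_cons.mp h).1 ?_) h.of_cons ihx ihy
    rw [map_append]
    exact mem_append_left _ hm

theorem sum_shuffles_ptChain_of_ne_nil {a b : ι} {α β : List ι} (hα : α ≠ []) (hβ : β ≠ [])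
    (ha : z a ∉ (α ++ β).map z) (hb : ((α ++ β ++ [b]).map z).Nodup) :
    ((shuffles α β).map fun σ => ptChain z a (σ ++ [b])).sum =
      (z a - z b) * ptChain z a (α ++ [b]) * ptChain z a (β ++ [b]) := by
  obtain ⟨x, xs, rfl⟩ := exists_cons_of_ne_nil hα
  obtain ⟨y, ys, rfl⟩ := exists_cons_of_ne_nil hβ
  exact sum_shuffles_cons_cons_ptChain z ha hb (sum_shuffles_ptChain z) (sum_shuffles_ptChain z)

end Chain

theorem sum_shuffles_PTl_eq_zero {F : Type*} [Field F] (z : ℕ → F) {α β : List ℕ} (n : ℕ)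
    (hα : α ≠ []) (hβ : β ≠ []) (h : ((α ++ β ++ [n]).map z).Nodup) :
    ((shuffles α β).map fun σ => PTl z (σ ++ [n])).sum = 0 := by
  have hn : z n ∉ (α ++ β).map z :=
    (nodup_cons.mp (((perm_append_singleton _ _).map z).nodup_iff.mp h)).1
  simp only [PTl_append_singleton, sum_shuffles_ptChain_of_ne_nil z hα hβ hn h, sub_self,
    zero_mul]

theorem stmt1_general {F : Type*} [Field F] (n i : ℕ) (hi1 : 1 ≤ i) (hi2 : i ≤ n - 2)
    (z : ℕ → F)
    (hz : ∀ a ∈ Finset.Icc 1 n, ∀ b ∈ Finset.Icc 1 n, z a = z b → a = b) :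
    ∑ γ ∈ (List.range' 1 i ++ List.range' (i + 1) (n - 1 - i)).permutations.toFinset.filter
        (fun γ => List.Sublist (List.range' 1 i) γ ∧ List.Sublist (List.range' (i + 1) (n - 1 - i)) γ),
      PTl z (γ ++ [n]) = 0 := by
  have hrange : range' 1 i ++ range' (i + 1) (n - 1 - i) ++ [n] = range' 1 n := by
    obtain ⟨m, rfl⟩ : ∃ m, n = i + m + 1 := ⟨n - 1 - i, by omega⟩
    rw [show i + m + 1 - 1 - i = m by omega, add_comm i 1, range'_append_1, range'_concat]
    simp [add_comm]
  have hnd : ((range' 1 i ++ range' (i + 1) (n - 1 - i) ++ [n]).map z).Nodup := by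
    rw [hrange]
    refine (nodup_range' 1).map_on fun a ha b hb => hz a ?_ b ?_ <;>
      simp only [mem_range'_1, Finset.mem_Icc] at ha hb ⊢ <;> omega
  have hαβ := (hnd.of_map z).sublist (sublist_append_left _ [n])
  rw [← toFinset_shuffles hαβ, sum_toFinset _ (nodup_shuffles (disjoint_of_nodup_append hαβ))]
  exact sum_shuffles_PTl_eq_zero z n (by rw [ne_eq, range'_eq_nil_iff]; omega)
    (by rw [ne_eq, range'_eq_nil_iff]; omega) hnd

/-- The shuffle identity for `k = 2` Parke-Taylor factors: the sum over all shuffles `γ`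
of the ordered lists `(1, …, i)` and `(i+1, …, n-1)` of `PT(γ, n)` vanishes.
Shuffles of the two (disjoint, duplicate-free) lists are exactly the permutations of their
concatenation containing each of them as a sublist. -/
theorem stmt1 {F : Type*} [Field F] (n i : ℕ) (hn : 3 ≤ n) (hi1 : 1 ≤ i) (hi2 : i ≤ n - 2)
    (z : ℕ → F)
    (hz : ∀ a ∈ Finset.Icc 1 n, ∀ b ∈ Finset.Icc 1 n, z a = z b → a = b) :
    ∑ γ ∈ (List.range' 1 i ++ List.range' (i + 1) (n - 1 - i)).permutations.toFinset.filter
        (fun γ => List.Sublist (List.range' 1 i) γ ∧ List.Sublist (List.range' (i + 1) (n - 1 - i)) γ),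
      PTl z (γ ++ [n]) = 0 :=
  stmt1_general n i hi1 hi2 z hz
end

section
/- Let $F$ be a field and $v_1,\dots,v_6 \in F^3$. If there exists a partition $\{a,b,c\} \sqcup \{d,e,f\} = \{1,\dots,6\}$ into two triples such that $\Delta_{abc} = 0$ and $\Delta_{def} = 0$ (i.e., the six points lie on a degenerate conic consisting of two lines with three points on each), then the Veronese polynomial vanishes: $V(v_1,\dots,v_6) = 0$. This holds for all ten such partitions, even though $V$ manifestly vanishes on only four of them. -/
set_option maxRecDepth 40000
set_option maxHeartbeats 1600000
set_option linter.unreachableTactic false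
set_option linter.unnecessarySeqFocus false
set_option linter.unusedTactic false
lemma det_fin_four' {R : Type*} [CommRing R] (M : Matrix (Fin 4) (Fin 4) R) :
    M.det = M 0 0 * M 1 1 * M 2 2 * M 3 3 - M 0 0 * M 1 1 * M 2 3 * M 3 2 - M 0 0 * M 1 2 * M 2 1 * M 3 3 + M 0 0 * M 1 2 * M 2 3 * M 3 1 + M 0 0 * M 1 3 * M 2 1 * M 3 2 - M 0 0 * M 1 3 * M 2 2 * M 3 1 - M 0 1 * M 1 0 * M 2 2 * M 3 3 + M 0 1 * M 1 0 * M 2 3 * M 3 2 + M 0 1 * M 1 2 * M 2 0 * M 3 3 - M 0 1 * M 1 2 * M 2 3 * M 3 0 - M 0 1 * M 1 3 * M 2 0 * M 3 2 + M 0 1 * M 1 3 * M 2 2 * M 3 0 + M 0 2 * M 1 0 * M 2 1 * M 3 3 - M 0 2 * M 1 0 * M 2 3 * M 3 1 - M 0 2 * M 1 1 * M 2 0 * M 3 3 + M 0 2 * M 1 1 * M 2 3 * M 3 0 + M 0 2 * M 1 3 * M 2 0 * M 3 1 - M 0 2 * M 1 3 * M 2 1 * M 3 0 - M 0 3 * M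 1 0 * M 2 1 * M 3 2 + M 0 3 * M 1 0 * M 2 2 * M 3 1 + M 0 3 * M 1 1 * M 2 0 * M 3 2 - M 0 3 * M 1 1 * M 2 2 * M 3 0 - M 0 3 * M 1 2 * M 2 0 * M 3 1 + M 0 3 * M 1 2 * M 2 1 * M 3 0 := by
  rw [Matrix.det_succ_row_zero]
  simp only [Fin.sum_univ_four, Matrix.det_fin_three, Matrix.submatrix_apply,
    show Fin.succ (0:Fin 3) = (1:Fin 4) from rfl,
    show Fin.succ (1:Fin 3) = (2:Fin 4) from rfl,
    show Fin.succ (2:Fin 3) = (3:Fin 4) from rfl,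
    show Fin.succAbove (0:Fin 4) (0:Fin 3) = (1:Fin 4) from rfl,
    show Fin.succAbove (0:Fin 4) (1:Fin 3) = (2:Fin 4) from rfl,
    show Fin.succAbove (0:Fin 4) (2:Fin 3) = (3:Fin 4) from rfl,
    show (((0:Fin 4):ℕ)) = 0 from rfl,
    show Fin.succAbove (1:Fin 4) (0:Fin 3) = (0:Fin 4) from rfl,
    show Fin.succAbove (1:Fin 4) (1:Fin 3) = (2:Fin 4) from rfl,
    show Fin.succAbove (1:Fin 4) (2:Fin 3) = (3:Fin 4) from rfl,
    show (((1:Fin 4):ℕ)) = 1 from rfl,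
    show Fin.succAbove (2:Fin 4) (0:Fin 3) = (0:Fin 4) from rfl,
    show Fin.succAbove (2:Fin 4) (1:Fin 3) = (1:Fin 4) from rfl,
    show Fin.succAbove (2:Fin 4) (2:Fin 3) = (3:Fin 4) from rfl,
    show (((2:Fin 4):ℕ)) = 2 from rfl,
    show Fin.succAbove (3:Fin 4) (0:Fin 3) = (0:Fin 4) from rfl,
    show Fin.succAbove (3:Fin 4) (1:Fin 3) = (1:Fin 4) from rfl,
    show Fin.succAbove (3:Fin 4) (2:Fin 3) = (2:Fin 4) from rfl,
    show (((3:Fin 4):ℕ)) = 3 from rfl]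
  ring

lemma det_fin_five' {R : Type*} [CommRing R] (M : Matrix (Fin 5) (Fin 5) R) :
    M.det = M 0 0 * M 1 1 * M 2 2 * M 3 3 * M 4 4 - M 0 0 * M 1 1 * M 2 2 * M 3 4 * M 4 3 - M 0 0 * M 1 1 * M 2 3 * M 3 2 * M 4 4 + M 0 0 * M 1 1 * M 2 3 * M 3 4 * M 4 2 + M 0 0 * M 1 1 * M 2 4 * M 3 2 * M 4 3 - M 0 0 * M 1 1 * M 2 4 * M 3 3 * M 4 2 - M 0 0 * M 1 2 * M 2 1 * M 3 3 * M 4 4 + M 0 0 * M 1 2 * M 2 1 * M 3 4 * M 4 3 + M 0 0 * M 1 2 * M 2 3 * M 3 1 * M 4 4 - M 0 0 * M 1 2 * M 2 3 * M 3 4 * M 4 1 - M 0 0 * M 1 2 * M 2 4 * M 3 1 * M 4 3 + M 0 0 * M 1 2 * M 2 4 * M 3 3 * M 4 1 + M 0 0 * M 1 3 * M 2 1 * M 3 2 * M 4 4 - M 0 0 * M 1 3 * M 2 1 * M 3 4 * M 4 2 - M 0 0 * M 1 3 * M 2 2 * M 3 1 * M 4 4 + M 0 0 * M 1 3 * M 2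 2 * M 3 4 * M 4 1 + M 0 0 * M 1 3 * M 2 4 * M 3 1 * M 4 2 - M 0 0 * M 1 3 * M 2 4 * M 3 2 * M 4 1 - M 0 0 * M 1 4 * M 2 1 * M 3 2 * M 4 3 + M 0 0 * M 1 4 * M 2 1 * M 3 3 * M 4 2 + M 0 0 * M 1 4 * M 2 2 * M 3 1 * M 4 3 - M 0 0 * M 1 4 * M 2 2 * M 3 3 * M 4 1 - M 0 0 * M 1 4 * M 2 3 * M 3 1 * M 4 2 + M 0 0 * M 1 4 * M 2 3 * M 3 2 * M 4 1 - M 0 1 * M 1 0 * M 2 2 * M 3 3 * M 4 4 + M 0 1 * M 1 0 * M 2 2 * M 3 4 * M 4 3 + M 0 1 * M 1 0 * M 2 3 * M 3 2 * M 4 4 - M 0 1 * M 1 0 * M 2 3 * M 3 4 * M 4 2 - M 0 1 * M 1 0 * M 2 4 * M 3 2 * M 4 3 + M 0 1 * M 1 0 * M 2 4 * M 3 3 * M 4 2 + M 0 1 * M 1 2 * M 2 0 * M 3 3 * M 4 4 - M 0 1 * M 1 2 * M 2 0 * M 3 4 * M 4 3 - M 0 1 * M 1 2 * M 2 3 * M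 3 0 * M 4 4 + M 0 1 * M 1 2 * M 2 3 * M 3 4 * M 4 0 + M 0 1 * M 1 2 * M 2 4 * M 3 0 * M 4 3 - M 0 1 * M 1 2 * M 2 4 * M 3 3 * M 4 0 - M 0 1 * M 1 3 * M 2 0 * M 3 2 * M 4 4 + M 0 1 * M 1 3 * M 2 0 * M 3 4 * M 4 2 + M 0 1 * M 1 3 * M 2 2 * M 3 0 * M 4 4 - M 0 1 * M 1 3 * M 2 2 * M 3 4 * M 4 0 - M 0 1 * M 1 3 * M 2 4 * M 3 0 * M 4 2 + M 0 1 * M 1 3 * M 2 4 * M 3 2 * M 4 0 + M 0 1 * M 1 4 * M 2 0 * M 3 2 * M 4 3 - M 0 1 * M 1 4 * M 2 0 * M 3 3 * M 4 2 - M 0 1 * M 1 4 * M 2 2 * M 3 0 * M 4 3 + M 0 1 * M 1 4 * M 2 2 * M 3 3 * M 4 0 + M 0 1 * M 1 4 * M 2 3 * M 3 0 * M 4 2 - M 0 1 * M 1 4 * M 2 3 * M 3 2 * M 4 0 + M 0 2 * M 1 0 * M 2 1 * M 3 3 * M 4 4 - M 0 2 * M 1 0 * M 2 1 * M 3 4 *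 M 4 3 - M 0 2 * M 1 0 * M 2 3 * M 3 1 * M 4 4 + M 0 2 * M 1 0 * M 2 3 * M 3 4 * M 4 1 + M 0 2 * M 1 0 * M 2 4 * M 3 1 * M 4 3 - M 0 2 * M 1 0 * M 2 4 * M 3 3 * M 4 1 - M 0 2 * M 1 1 * M 2 0 * M 3 3 * M 4 4 + M 0 2 * M 1 1 * M 2 0 * M 3 4 * M 4 3 + M 0 2 * M 1 1 * M 2 3 * M 3 0 * M 4 4 - M 0 2 * M 1 1 * M 2 3 * M 3 4 * M 4 0 - M 0 2 * M 1 1 * M 2 4 * M 3 0 * M 4 3 + M 0 2 * M 1 1 * M 2 4 * M 3 3 * M 4 0 + M 0 2 * M 1 3 * M 2 0 * M 3 1 * M 4 4 - M 0 2 * M 1 3 * M 2 0 * M 3 4 * M 4 1 - M 0 2 * M 1 3 * M 2 1 * M 3 0 * M 4 4 + M 0 2 * M 1 3 * M 2 1 * M 3 4 * M 4 0 + M 0 2 * M 1 3 * M 2 4 * M 3 0 * M 4 1 - M 0 2 * M 1 3 * M 2 4 * M 3 1 * M 4 0 - M 0 2 * M 1 4 * M 2 0 * M 3 1 * M 4 3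 + M 0 2 * M 1 4 * M 2 0 * M 3 3 * M 4 1 + M 0 2 * M 1 4 * M 2 1 * M 3 0 * M 4 3 - M 0 2 * M 1 4 * M 2 1 * M 3 3 * M 4 0 - M 0 2 * M 1 4 * M 2 3 * M 3 0 * M 4 1 + M 0 2 * M 1 4 * M 2 3 * M 3 1 * M 4 0 - M 0 3 * M 1 0 * M 2 1 * M 3 2 * M 4 4 + M 0 3 * M 1 0 * M 2 1 * M 3 4 * M 4 2 + M 0 3 * M 1 0 * M 2 2 * M 3 1 * M 4 4 - M 0 3 * M 1 0 * M 2 2 * M 3 4 * M 4 1 - M 0 3 * M 1 0 * M 2 4 * M 3 1 * M 4 2 + M 0 3 * M 1 0 * M 2 4 * M 3 2 * M 4 1 + M 0 3 * M 1 1 * M 2 0 * M 3 2 * M 4 4 - M 0 3 * M 1 1 * M 2 0 * M 3 4 * M 4 2 - M 0 3 * M 1 1 * M 2 2 * M 3 0 * M 4 4 + M 0 3 * M 1 1 * M 2 2 * M 3 4 * M 4 0 + M 0 3 * M 1 1 * M 2 4 * M 3 0 * M 4 2 - M 0 3 * M 1 1 * M 2 4 * M 3 2 * M 4 0 - M 0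 3 * M 1 2 * M 2 0 * M 3 1 * M 4 4 + M 0 3 * M 1 2 * M 2 0 * M 3 4 * M 4 1 + M 0 3 * M 1 2 * M 2 1 * M 3 0 * M 4 4 - M 0 3 * M 1 2 * M 2 1 * M 3 4 * M 4 0 - M 0 3 * M 1 2 * M 2 4 * M 3 0 * M 4 1 + M 0 3 * M 1 2 * M 2 4 * M 3 1 * M 4 0 + M 0 3 * M 1 4 * M 2 0 * M 3 1 * M 4 2 - M 0 3 * M 1 4 * M 2 0 * M 3 2 * M 4 1 - M 0 3 * M 1 4 * M 2 1 * M 3 0 * M 4 2 + M 0 3 * M 1 4 * M 2 1 * M 3 2 * M 4 0 + M 0 3 * M 1 4 * M 2 2 * M 3 0 * M 4 1 - M 0 3 * M 1 4 * M 2 2 * M 3 1 * M 4 0 + M 0 4 * M 1 0 * M 2 1 * M 3 2 * M 4 3 - M 0 4 * M 1 0 * M 2 1 * M 3 3 * M 4 2 - M 0 4 * M 1 0 * M 2 2 * M 3 1 * M 4 3 + M 0 4 * M 1 0 * M 2 2 * M 3 3 * M 4 1 + M 0 4 * M 1 0 * M 2 3 * M 3 1 * M 4 2 - M 0 4 * M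 1 0 * M 2 3 * M 3 2 * M 4 1 - M 0 4 * M 1 1 * M 2 0 * M 3 2 * M 4 3 + M 0 4 * M 1 1 * M 2 0 * M 3 3 * M 4 2 + M 0 4 * M 1 1 * M 2 2 * M 3 0 * M 4 3 - M 0 4 * M 1 1 * M 2 2 * M 3 3 * M 4 0 - M 0 4 * M 1 1 * M 2 3 * M 3 0 * M 4 2 + M 0 4 * M 1 1 * M 2 3 * M 3 2 * M 4 0 + M 0 4 * M 1 2 * M 2 0 * M 3 1 * M 4 3 - M 0 4 * M 1 2 * M 2 0 * M 3 3 * M 4 1 - M 0 4 * M 1 2 * M 2 1 * M 3 0 * M 4 3 + M 0 4 * M 1 2 * M 2 1 * M 3 3 * M 4 0 + M 0 4 * M 1 2 * M 2 3 * M 3 0 * M 4 1 - M 0 4 * M 1 2 * M 2 3 * M 3 1 * M 4 0 - M 0 4 * M 1 3 * M 2 0 * M 3 1 * M 4 2 + M 0 4 * M 1 3 * M 2 0 * M 3 2 * M 4 1 + M 0 4 * M 1 3 * M 2 1 * M 3 0 * M 4 2 - M 0 4 * M 1 3 * M 2 1 * M 3 2 * M 4 0 - M 0 4 * M 1 3 *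 M 2 2 * M 3 0 * M 4 1 + M 0 4 * M 1 3 * M 2 2 * M 3 1 * M 4 0 := by
  rw [Matrix.det_succ_row_zero]
  simp only [Fin.sum_univ_five, det_fin_four', Matrix.submatrix_apply,
    show Fin.succ (0:Fin 4) = (1:Fin 5) from rfl,
    show Fin.succ (1:Fin 4) = (2:Fin 5) from rfl,
    show Fin.succ (2:Fin 4) = (3:Fin 5) from rfl,
    show Fin.succ (3:Fin 4) = (4:Fin 5) from rfl,
    show Fin.succAbove (0:Fin 5) (0:Fin 4) = (1:Fin 5) from rfl,
    show Fin.succAbove (0:Fin 5) (1:Fin 4) = (2:Fin 5) from rfl,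
    show Fin.succAbove (0:Fin 5) (2:Fin 4) = (3:Fin 5) from rfl,
    show Fin.succAbove (0:Fin 5) (3:Fin 4) = (4:Fin 5) from rfl,
    show (((0:Fin 5):ℕ)) = 0 from rfl,
    show Fin.succAbove (1:Fin 5) (0:Fin 4) = (0:Fin 5) from rfl,
    show Fin.succAbove (1:Fin 5) (1:Fin 4) = (2:Fin 5) from rfl,
    show Fin.succAbove (1:Fin 5) (2:Fin 4) = (3:Fin 5) from rfl,
    show Fin.succAbove (1:Fin 5) (3:Fin 4) = (4:Fin 5) from rfl,
    show (((1:Fin 5):ℕ)) = 1 from rfl,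
    show Fin.succAbove (2:Fin 5) (0:Fin 4) = (0:Fin 5) from rfl,
    show Fin.succAbove (2:Fin 5) (1:Fin 4) = (1:Fin 5) from rfl,
    show Fin.succAbove (2:Fin 5) (2:Fin 4) = (3:Fin 5) from rfl,
    show Fin.succAbove (2:Fin 5) (3:Fin 4) = (4:Fin 5) from rfl,
    show (((2:Fin 5):ℕ)) = 2 from rfl,
    show Fin.succAbove (3:Fin 5) (0:Fin 4) = (0:Fin 5) from rfl,
    show Fin.succAbove (3:Fin 5) (1:Fin 4) = (1:Fin 5) from rfl,
    show Fin.succAbove (3:Fin 5) (2:Fin 4) = (2:Fin 5) from rfl,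
    show Fin.succAbove (3:Fin 5) (3:Fin 4) = (4:Fin 5) from rfl,
    show (((3:Fin 5):ℕ)) = 3 from rfl,
    show Fin.succAbove (4:Fin 5) (0:Fin 4) = (0:Fin 5) from rfl,
    show Fin.succAbove (4:Fin 5) (1:Fin 4) = (1:Fin 5) from rfl,
    show Fin.succAbove (4:Fin 5) (2:Fin 4) = (2:Fin 5) from rfl,
    show Fin.succAbove (4:Fin 5) (3:Fin 4) = (3:Fin 5) from rfl,
    show (((4:Fin 5):ℕ)) = 4 from rfl]
  ring

lemma det_fin_six' {R : Type*} [CommRing R] (M : Matrix (Fin 6) (Fin 6) R) :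
    M.det = M 0 0 * M 1 1 * M 2 2 * M 3 3 * M 4 4 * M 5 5 - M 0 0 * M 1 1 * M 2 2 * M 3 3 * M 4 5 * M 5 4 - M 0 0 * M 1 1 * M 2 2 * M 3 4 * M 4 3 * M 5 5 + M 0 0 * M 1 1 * M 2 2 * M 3 4 * M 4 5 * M 5 3 + M 0 0 * M 1 1 * M 2 2 * M 3 5 * M 4 3 * M 5 4 - M 0 0 * M 1 1 * M 2 2 * M 3 5 * M 4 4 * M 5 3 - M 0 0 * M 1 1 * M 2 3 * M 3 2 * M 4 4 * M 5 5 + M 0 0 * M 1 1 * M 2 3 * M 3 2 * M 4 5 * M 5 4 + M 0 0 * M 1 1 * M 2 3 * M 3 4 * M 4 2 * M 5 5 - M 0 0 * M 1 1 * M 2 3 * M 3 4 * M 4 5 * M 5 2 - M 0 0 * M 1 1 * M 2 3 * M 3 5 * M 4 2 * M 5 4 + M 0 0 * M 1 1 * M 2 3 * M 3 5 * M 4 4 * M 5 2 + M 0 0 * M 1 1 * M 2 4 * M 3 2 * M 4 3 * M 5 5 - M 0 0 * M 1 1 * M 2 4 * M 3 2 * M 4 5 * M 5 3 - M 0 0 *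 M 1 1 * M 2 4 * M 3 3 * M 4 2 * M 5 5 + M 0 0 * M 1 1 * M 2 4 * M 3 3 * M 4 5 * M 5 2 + M 0 0 * M 1 1 * M 2 4 * M 3 5 * M 4 2 * M 5 3 - M 0 0 * M 1 1 * M 2 4 * M 3 5 * M 4 3 * M 5 2 - M 0 0 * M 1 1 * M 2 5 * M 3 2 * M 4 3 * M 5 4 + M 0 0 * M 1 1 * M 2 5 * M 3 2 * M 4 4 * M 5 3 + M 0 0 * M 1 1 * M 2 5 * M 3 3 * M 4 2 * M 5 4 - M 0 0 * M 1 1 * M 2 5 * M 3 3 * M 4 4 * M 5 2 - M 0 0 * M 1 1 * M 2 5 * M 3 4 * M 4 2 * M 5 3 + M 0 0 * M 1 1 * M 2 5 * M 3 4 * M 4 3 * M 5 2 - M 0 0 * M 1 2 * M 2 1 * M 3 3 * M 4 4 * M 5 5 + M 0 0 * M 1 2 * M 2 1 * M 3 3 * M 4 5 * M 5 4 + M 0 0 * M 1 2 * M 2 1 * M 3 4 * M 4 3 * M 5 5 - M 0 0 * M 1 2 * M 2 1 * M 3 4 * M 4 5 * M 5 3 - M 0 0 * M 1 2 * M 2 1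 * M 3 5 * M 4 3 * M 5 4 + M 0 0 * M 1 2 * M 2 1 * M 3 5 * M 4 4 * M 5 3 + M 0 0 * M 1 2 * M 2 3 * M 3 1 * M 4 4 * M 5 5 - M 0 0 * M 1 2 * M 2 3 * M 3 1 * M 4 5 * M 5 4 - M 0 0 * M 1 2 * M 2 3 * M 3 4 * M 4 1 * M 5 5 + M 0 0 * M 1 2 * M 2 3 * M 3 4 * M 4 5 * M 5 1 + M 0 0 * M 1 2 * M 2 3 * M 3 5 * M 4 1 * M 5 4 - M 0 0 * M 1 2 * M 2 3 * M 3 5 * M 4 4 * M 5 1 - M 0 0 * M 1 2 * M 2 4 * M 3 1 * M 4 3 * M 5 5 + M 0 0 * M 1 2 * M 2 4 * M 3 1 * M 4 5 * M 5 3 + M 0 0 * M 1 2 * M 2 4 * M 3 3 * M 4 1 * M 5 5 - M 0 0 * M 1 2 * M 2 4 * M 3 3 * M 4 5 * M 5 1 - M 0 0 * M 1 2 * M 2 4 * M 3 5 * M 4 1 * M 5 3 + M 0 0 * M 1 2 * M 2 4 * M 3 5 * M 4 3 * M 5 1 + M 0 0 * M 1 2 * M 2 5 * M 3 1 * M 4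 3 * M 5 4 - M 0 0 * M 1 2 * M 2 5 * M 3 1 * M 4 4 * M 5 3 - M 0 0 * M 1 2 * M 2 5 * M 3 3 * M 4 1 * M 5 4 + M 0 0 * M 1 2 * M 2 5 * M 3 3 * M 4 4 * M 5 1 + M 0 0 * M 1 2 * M 2 5 * M 3 4 * M 4 1 * M 5 3 - M 0 0 * M 1 2 * M 2 5 * M 3 4 * M 4 3 * M 5 1 + M 0 0 * M 1 3 * M 2 1 * M 3 2 * M 4 4 * M 5 5 - M 0 0 * M 1 3 * M 2 1 * M 3 2 * M 4 5 * M 5 4 - M 0 0 * M 1 3 * M 2 1 * M 3 4 * M 4 2 * M 5 5 + M 0 0 * M 1 3 * M 2 1 * M 3 4 * M 4 5 * M 5 2 + M 0 0 * M 1 3 * M 2 1 * M 3 5 * M 4 2 * M 5 4 - M 0 0 * M 1 3 * M 2 1 * M 3 5 * M 4 4 * M 5 2 - M 0 0 * M 1 3 * M 2 2 * M 3 1 * M 4 4 * M 5 5 + M 0 0 * M 1 3 * M 2 2 * M 3 1 * M 4 5 * M 5 4 + M 0 0 * M 1 3 * M 2 2 * M 3 4 * M 4 1 * M 5 5 - M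 0 0 * M 1 3 * M 2 2 * M 3 4 * M 4 5 * M 5 1 - M 0 0 * M 1 3 * M 2 2 * M 3 5 * M 4 1 * M 5 4 + M 0 0 * M 1 3 * M 2 2 * M 3 5 * M 4 4 * M 5 1 + M 0 0 * M 1 3 * M 2 4 * M 3 1 * M 4 2 * M 5 5 - M 0 0 * M 1 3 * M 2 4 * M 3 1 * M 4 5 * M 5 2 - M 0 0 * M 1 3 * M 2 4 * M 3 2 * M 4 1 * M 5 5 + M 0 0 * M 1 3 * M 2 4 * M 3 2 * M 4 5 * M 5 1 + M 0 0 * M 1 3 * M 2 4 * M 3 5 * M 4 1 * M 5 2 - M 0 0 * M 1 3 * M 2 4 * M 3 5 * M 4 2 * M 5 1 - M 0 0 * M 1 3 * M 2 5 * M 3 1 * M 4 2 * M 5 4 + M 0 0 * M 1 3 * M 2 5 * M 3 1 * M 4 4 * M 5 2 + M 0 0 * M 1 3 * M 2 5 * M 3 2 * M 4 1 * M 5 4 - M 0 0 * M 1 3 * M 2 5 * M 3 2 * M 4 4 * M 5 1 - M 0 0 * M 1 3 * M 2 5 * M 3 4 * M 4 1 * M 5 2 + M 0 0 * M 1 3 *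 M 2 5 * M 3 4 * M 4 2 * M 5 1 - M 0 0 * M 1 4 * M 2 1 * M 3 2 * M 4 3 * M 5 5 + M 0 0 * M 1 4 * M 2 1 * M 3 2 * M 4 5 * M 5 3 + M 0 0 * M 1 4 * M 2 1 * M 3 3 * M 4 2 * M 5 5 - M 0 0 * M 1 4 * M 2 1 * M 3 3 * M 4 5 * M 5 2 - M 0 0 * M 1 4 * M 2 1 * M 3 5 * M 4 2 * M 5 3 + M 0 0 * M 1 4 * M 2 1 * M 3 5 * M 4 3 * M 5 2 + M 0 0 * M 1 4 * M 2 2 * M 3 1 * M 4 3 * M 5 5 - M 0 0 * M 1 4 * M 2 2 * M 3 1 * M 4 5 * M 5 3 - M 0 0 * M 1 4 * M 2 2 * M 3 3 * M 4 1 * M 5 5 + M 0 0 * M 1 4 * M 2 2 * M 3 3 * M 4 5 * M 5 1 + M 0 0 * M 1 4 * M 2 2 * M 3 5 * M 4 1 * M 5 3 - M 0 0 * M 1 4 * M 2 2 * M 3 5 * M 4 3 * M 5 1 - M 0 0 * M 1 4 * M 2 3 * M 3 1 * M 4 2 * M 5 5 + M 0 0 * M 1 4 * M 2 3 * M 3 1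 * M 4 5 * M 5 2 + M 0 0 * M 1 4 * M 2 3 * M 3 2 * M 4 1 * M 5 5 - M 0 0 * M 1 4 * M 2 3 * M 3 2 * M 4 5 * M 5 1 - M 0 0 * M 1 4 * M 2 3 * M 3 5 * M 4 1 * M 5 2 + M 0 0 * M 1 4 * M 2 3 * M 3 5 * M 4 2 * M 5 1 + M 0 0 * M 1 4 * M 2 5 * M 3 1 * M 4 2 * M 5 3 - M 0 0 * M 1 4 * M 2 5 * M 3 1 * M 4 3 * M 5 2 - M 0 0 * M 1 4 * M 2 5 * M 3 2 * M 4 1 * M 5 3 + M 0 0 * M 1 4 * M 2 5 * M 3 2 * M 4 3 * M 5 1 + M 0 0 * M 1 4 * M 2 5 * M 3 3 * M 4 1 * M 5 2 - M 0 0 * M 1 4 * M 2 5 * M 3 3 * M 4 2 * M 5 1 + M 0 0 * M 1 5 * M 2 1 * M 3 2 * M 4 3 * M 5 4 - M 0 0 * M 1 5 * M 2 1 * M 3 2 * M 4 4 * M 5 3 - M 0 0 * M 1 5 * M 2 1 * M 3 3 * M 4 2 * M 5 4 + M 0 0 * M 1 5 * M 2 1 * M 3 3 * M 4 4 * M 5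 2 + M 0 0 * M 1 5 * M 2 1 * M 3 4 * M 4 2 * M 5 3 - M 0 0 * M 1 5 * M 2 1 * M 3 4 * M 4 3 * M 5 2 - M 0 0 * M 1 5 * M 2 2 * M 3 1 * M 4 3 * M 5 4 + M 0 0 * M 1 5 * M 2 2 * M 3 1 * M 4 4 * M 5 3 + M 0 0 * M 1 5 * M 2 2 * M 3 3 * M 4 1 * M 5 4 - M 0 0 * M 1 5 * M 2 2 * M 3 3 * M 4 4 * M 5 1 - M 0 0 * M 1 5 * M 2 2 * M 3 4 * M 4 1 * M 5 3 + M 0 0 * M 1 5 * M 2 2 * M 3 4 * M 4 3 * M 5 1 + M 0 0 * M 1 5 * M 2 3 * M 3 1 * M 4 2 * M 5 4 - M 0 0 * M 1 5 * M 2 3 * M 3 1 * M 4 4 * M 5 2 - M 0 0 * M 1 5 * M 2 3 * M 3 2 * M 4 1 * M 5 4 + M 0 0 * M 1 5 * M 2 3 * M 3 2 * M 4 4 * M 5 1 + M 0 0 * M 1 5 * M 2 3 * M 3 4 * M 4 1 * M 5 2 - M 0 0 * M 1 5 * M 2 3 * M 3 4 * M 4 2 * M 5 1 - M 0 0 * M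 1 5 * M 2 4 * M 3 1 * M 4 2 * M 5 3 + M 0 0 * M 1 5 * M 2 4 * M 3 1 * M 4 3 * M 5 2 + M 0 0 * M 1 5 * M 2 4 * M 3 2 * M 4 1 * M 5 3 - M 0 0 * M 1 5 * M 2 4 * M 3 2 * M 4 3 * M 5 1 - M 0 0 * M 1 5 * M 2 4 * M 3 3 * M 4 1 * M 5 2 + M 0 0 * M 1 5 * M 2 4 * M 3 3 * M 4 2 * M 5 1 - M 0 1 * M 1 0 * M 2 2 * M 3 3 * M 4 4 * M 5 5 + M 0 1 * M 1 0 * M 2 2 * M 3 3 * M 4 5 * M 5 4 + M 0 1 * M 1 0 * M 2 2 * M 3 4 * M 4 3 * M 5 5 - M 0 1 * M 1 0 * M 2 2 * M 3 4 * M 4 5 * M 5 3 - M 0 1 * M 1 0 * M 2 2 * M 3 5 * M 4 3 * M 5 4 + M 0 1 * M 1 0 * M 2 2 * M 3 5 * M 4 4 * M 5 3 + M 0 1 * M 1 0 * M 2 3 * M 3 2 * M 4 4 * M 5 5 - M 0 1 * M 1 0 * M 2 3 * M 3 2 * M 4 5 * M 5 4 - M 0 1 * M 1 0 * M 2 3 *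 M 3 4 * M 4 2 * M 5 5 + M 0 1 * M 1 0 * M 2 3 * M 3 4 * M 4 5 * M 5 2 + M 0 1 * M 1 0 * M 2 3 * M 3 5 * M 4 2 * M 5 4 - M 0 1 * M 1 0 * M 2 3 * M 3 5 * M 4 4 * M 5 2 - M 0 1 * M 1 0 * M 2 4 * M 3 2 * M 4 3 * M 5 5 + M 0 1 * M 1 0 * M 2 4 * M 3 2 * M 4 5 * M 5 3 + M 0 1 * M 1 0 * M 2 4 * M 3 3 * M 4 2 * M 5 5 - M 0 1 * M 1 0 * M 2 4 * M 3 3 * M 4 5 * M 5 2 - M 0 1 * M 1 0 * M 2 4 * M 3 5 * M 4 2 * M 5 3 + M 0 1 * M 1 0 * M 2 4 * M 3 5 * M 4 3 * M 5 2 + M 0 1 * M 1 0 * M 2 5 * M 3 2 * M 4 3 * M 5 4 - M 0 1 * M 1 0 * M 2 5 * M 3 2 * M 4 4 * M 5 3 - M 0 1 * M 1 0 * M 2 5 * M 3 3 * M 4 2 * M 5 4 + M 0 1 * M 1 0 * M 2 5 * M 3 3 * M 4 4 * M 5 2 + M 0 1 * M 1 0 * M 2 5 * M 3 4 * M 4 2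 * M 5 3 - M 0 1 * M 1 0 * M 2 5 * M 3 4 * M 4 3 * M 5 2 + M 0 1 * M 1 2 * M 2 0 * M 3 3 * M 4 4 * M 5 5 - M 0 1 * M 1 2 * M 2 0 * M 3 3 * M 4 5 * M 5 4 - M 0 1 * M 1 2 * M 2 0 * M 3 4 * M 4 3 * M 5 5 + M 0 1 * M 1 2 * M 2 0 * M 3 4 * M 4 5 * M 5 3 + M 0 1 * M 1 2 * M 2 0 * M 3 5 * M 4 3 * M 5 4 - M 0 1 * M 1 2 * M 2 0 * M 3 5 * M 4 4 * M 5 3 - M 0 1 * M 1 2 * M 2 3 * M 3 0 * M 4 4 * M 5 5 + M 0 1 * M 1 2 * M 2 3 * M 3 0 * M 4 5 * M 5 4 + M 0 1 * M 1 2 * M 2 3 * M 3 4 * M 4 0 * M 5 5 - M 0 1 * M 1 2 * M 2 3 * M 3 4 * M 4 5 * M 5 0 - M 0 1 * M 1 2 * M 2 3 * M 3 5 * M 4 0 * M 5 4 + M 0 1 * M 1 2 * M 2 3 * M 3 5 * M 4 4 * M 5 0 + M 0 1 * M 1 2 * M 2 4 * M 3 0 * M 4 3 * M 5 5 - M 0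 1 * M 1 2 * M 2 4 * M 3 0 * M 4 5 * M 5 3 - M 0 1 * M 1 2 * M 2 4 * M 3 3 * M 4 0 * M 5 5 + M 0 1 * M 1 2 * M 2 4 * M 3 3 * M 4 5 * M 5 0 + M 0 1 * M 1 2 * M 2 4 * M 3 5 * M 4 0 * M 5 3 - M 0 1 * M 1 2 * M 2 4 * M 3 5 * M 4 3 * M 5 0 - M 0 1 * M 1 2 * M 2 5 * M 3 0 * M 4 3 * M 5 4 + M 0 1 * M 1 2 * M 2 5 * M 3 0 * M 4 4 * M 5 3 + M 0 1 * M 1 2 * M 2 5 * M 3 3 * M 4 0 * M 5 4 - M 0 1 * M 1 2 * M 2 5 * M 3 3 * M 4 4 * M 5 0 - M 0 1 * M 1 2 * M 2 5 * M 3 4 * M 4 0 * M 5 3 + M 0 1 * M 1 2 * M 2 5 * M 3 4 * M 4 3 * M 5 0 - M 0 1 * M 1 3 * M 2 0 * M 3 2 * M 4 4 * M 5 5 + M 0 1 * M 1 3 * M 2 0 * M 3 2 * M 4 5 * M 5 4 + M 0 1 * M 1 3 * M 2 0 * M 3 4 * M 4 2 * M 5 5 - M 0 1 * M 1 3 * M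 2 0 * M 3 4 * M 4 5 * M 5 2 - M 0 1 * M 1 3 * M 2 0 * M 3 5 * M 4 2 * M 5 4 + M 0 1 * M 1 3 * M 2 0 * M 3 5 * M 4 4 * M 5 2 + M 0 1 * M 1 3 * M 2 2 * M 3 0 * M 4 4 * M 5 5 - M 0 1 * M 1 3 * M 2 2 * M 3 0 * M 4 5 * M 5 4 - M 0 1 * M 1 3 * M 2 2 * M 3 4 * M 4 0 * M 5 5 + M 0 1 * M 1 3 * M 2 2 * M 3 4 * M 4 5 * M 5 0 + M 0 1 * M 1 3 * M 2 2 * M 3 5 * M 4 0 * M 5 4 - M 0 1 * M 1 3 * M 2 2 * M 3 5 * M 4 4 * M 5 0 - M 0 1 * M 1 3 * M 2 4 * M 3 0 * M 4 2 * M 5 5 + M 0 1 * M 1 3 * M 2 4 * M 3 0 * M 4 5 * M 5 2 + M 0 1 * M 1 3 * M 2 4 * M 3 2 * M 4 0 * M 5 5 - M 0 1 * M 1 3 * M 2 4 * M 3 2 * M 4 5 * M 5 0 - M 0 1 * M 1 3 * M 2 4 * M 3 5 * M 4 0 * M 5 2 + M 0 1 * M 1 3 * M 2 4 * M 3 5 *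 M 4 2 * M 5 0 + M 0 1 * M 1 3 * M 2 5 * M 3 0 * M 4 2 * M 5 4 - M 0 1 * M 1 3 * M 2 5 * M 3 0 * M 4 4 * M 5 2 - M 0 1 * M 1 3 * M 2 5 * M 3 2 * M 4 0 * M 5 4 + M 0 1 * M 1 3 * M 2 5 * M 3 2 * M 4 4 * M 5 0 + M 0 1 * M 1 3 * M 2 5 * M 3 4 * M 4 0 * M 5 2 - M 0 1 * M 1 3 * M 2 5 * M 3 4 * M 4 2 * M 5 0 + M 0 1 * M 1 4 * M 2 0 * M 3 2 * M 4 3 * M 5 5 - M 0 1 * M 1 4 * M 2 0 * M 3 2 * M 4 5 * M 5 3 - M 0 1 * M 1 4 * M 2 0 * M 3 3 * M 4 2 * M 5 5 + M 0 1 * M 1 4 * M 2 0 * M 3 3 * M 4 5 * M 5 2 + M 0 1 * M 1 4 * M 2 0 * M 3 5 * M 4 2 * M 5 3 - M 0 1 * M 1 4 * M 2 0 * M 3 5 * M 4 3 * M 5 2 - M 0 1 * M 1 4 * M 2 2 * M 3 0 * M 4 3 * M 5 5 + M 0 1 * M 1 4 * M 2 2 * M 3 0 * M 4 5 * M 5 3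 + M 0 1 * M 1 4 * M 2 2 * M 3 3 * M 4 0 * M 5 5 - M 0 1 * M 1 4 * M 2 2 * M 3 3 * M 4 5 * M 5 0 - M 0 1 * M 1 4 * M 2 2 * M 3 5 * M 4 0 * M 5 3 + M 0 1 * M 1 4 * M 2 2 * M 3 5 * M 4 3 * M 5 0 + M 0 1 * M 1 4 * M 2 3 * M 3 0 * M 4 2 * M 5 5 - M 0 1 * M 1 4 * M 2 3 * M 3 0 * M 4 5 * M 5 2 - M 0 1 * M 1 4 * M 2 3 * M 3 2 * M 4 0 * M 5 5 + M 0 1 * M 1 4 * M 2 3 * M 3 2 * M 4 5 * M 5 0 + M 0 1 * M 1 4 * M 2 3 * M 3 5 * M 4 0 * M 5 2 - M 0 1 * M 1 4 * M 2 3 * M 3 5 * M 4 2 * M 5 0 - M 0 1 * M 1 4 * M 2 5 * M 3 0 * M 4 2 * M 5 3 + M 0 1 * M 1 4 * M 2 5 * M 3 0 * M 4 3 * M 5 2 + M 0 1 * M 1 4 * M 2 5 * M 3 2 * M 4 0 * M 5 3 - M 0 1 * M 1 4 * M 2 5 * M 3 2 * M 4 3 * M 5 0 - M 0 1 * M 1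 4 * M 2 5 * M 3 3 * M 4 0 * M 5 2 + M 0 1 * M 1 4 * M 2 5 * M 3 3 * M 4 2 * M 5 0 - M 0 1 * M 1 5 * M 2 0 * M 3 2 * M 4 3 * M 5 4 + M 0 1 * M 1 5 * M 2 0 * M 3 2 * M 4 4 * M 5 3 + M 0 1 * M 1 5 * M 2 0 * M 3 3 * M 4 2 * M 5 4 - M 0 1 * M 1 5 * M 2 0 * M 3 3 * M 4 4 * M 5 2 - M 0 1 * M 1 5 * M 2 0 * M 3 4 * M 4 2 * M 5 3 + M 0 1 * M 1 5 * M 2 0 * M 3 4 * M 4 3 * M 5 2 + M 0 1 * M 1 5 * M 2 2 * M 3 0 * M 4 3 * M 5 4 - M 0 1 * M 1 5 * M 2 2 * M 3 0 * M 4 4 * M 5 3 - M 0 1 * M 1 5 * M 2 2 * M 3 3 * M 4 0 * M 5 4 + M 0 1 * M 1 5 * M 2 2 * M 3 3 * M 4 4 * M 5 0 + M 0 1 * M 1 5 * M 2 2 * M 3 4 * M 4 0 * M 5 3 - M 0 1 * M 1 5 * M 2 2 * M 3 4 * M 4 3 * M 5 0 - M 0 1 * M 1 5 * M 2 3 * M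 3 0 * M 4 2 * M 5 4 + M 0 1 * M 1 5 * M 2 3 * M 3 0 * M 4 4 * M 5 2 + M 0 1 * M 1 5 * M 2 3 * M 3 2 * M 4 0 * M 5 4 - M 0 1 * M 1 5 * M 2 3 * M 3 2 * M 4 4 * M 5 0 - M 0 1 * M 1 5 * M 2 3 * M 3 4 * M 4 0 * M 5 2 + M 0 1 * M 1 5 * M 2 3 * M 3 4 * M 4 2 * M 5 0 + M 0 1 * M 1 5 * M 2 4 * M 3 0 * M 4 2 * M 5 3 - M 0 1 * M 1 5 * M 2 4 * M 3 0 * M 4 3 * M 5 2 - M 0 1 * M 1 5 * M 2 4 * M 3 2 * M 4 0 * M 5 3 + M 0 1 * M 1 5 * M 2 4 * M 3 2 * M 4 3 * M 5 0 + M 0 1 * M 1 5 * M 2 4 * M 3 3 * M 4 0 * M 5 2 - M 0 1 * M 1 5 * M 2 4 * M 3 3 * M 4 2 * M 5 0 + M 0 2 * M 1 0 * M 2 1 * M 3 3 * M 4 4 * M 5 5 - M 0 2 * M 1 0 * M 2 1 * M 3 3 * M 4 5 * M 5 4 - M 0 2 * M 1 0 * M 2 1 * M 3 4 * M 4 3 *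 M 5 5 + M 0 2 * M 1 0 * M 2 1 * M 3 4 * M 4 5 * M 5 3 + M 0 2 * M 1 0 * M 2 1 * M 3 5 * M 4 3 * M 5 4 - M 0 2 * M 1 0 * M 2 1 * M 3 5 * M 4 4 * M 5 3 - M 0 2 * M 1 0 * M 2 3 * M 3 1 * M 4 4 * M 5 5 + M 0 2 * M 1 0 * M 2 3 * M 3 1 * M 4 5 * M 5 4 + M 0 2 * M 1 0 * M 2 3 * M 3 4 * M 4 1 * M 5 5 - M 0 2 * M 1 0 * M 2 3 * M 3 4 * M 4 5 * M 5 1 - M 0 2 * M 1 0 * M 2 3 * M 3 5 * M 4 1 * M 5 4 + M 0 2 * M 1 0 * M 2 3 * M 3 5 * M 4 4 * M 5 1 + M 0 2 * M 1 0 * M 2 4 * M 3 1 * M 4 3 * M 5 5 - M 0 2 * M 1 0 * M 2 4 * M 3 1 * M 4 5 * M 5 3 - M 0 2 * M 1 0 * M 2 4 * M 3 3 * M 4 1 * M 5 5 + M 0 2 * M 1 0 * M 2 4 * M 3 3 * M 4 5 * M 5 1 + M 0 2 * M 1 0 * M 2 4 * M 3 5 * M 4 1 * M 5 3 - M 0 2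 * M 1 0 * M 2 4 * M 3 5 * M 4 3 * M 5 1 - M 0 2 * M 1 0 * M 2 5 * M 3 1 * M 4 3 * M 5 4 + M 0 2 * M 1 0 * M 2 5 * M 3 1 * M 4 4 * M 5 3 + M 0 2 * M 1 0 * M 2 5 * M 3 3 * M 4 1 * M 5 4 - M 0 2 * M 1 0 * M 2 5 * M 3 3 * M 4 4 * M 5 1 - M 0 2 * M 1 0 * M 2 5 * M 3 4 * M 4 1 * M 5 3 + M 0 2 * M 1 0 * M 2 5 * M 3 4 * M 4 3 * M 5 1 - M 0 2 * M 1 1 * M 2 0 * M 3 3 * M 4 4 * M 5 5 + M 0 2 * M 1 1 * M 2 0 * M 3 3 * M 4 5 * M 5 4 + M 0 2 * M 1 1 * M 2 0 * M 3 4 * M 4 3 * M 5 5 - M 0 2 * M 1 1 * M 2 0 * M 3 4 * M 4 5 * M 5 3 - M 0 2 * M 1 1 * M 2 0 * M 3 5 * M 4 3 * M 5 4 + M 0 2 * M 1 1 * M 2 0 * M 3 5 * M 4 4 * M 5 3 + M 0 2 * M 1 1 * M 2 3 * M 3 0 * M 4 4 * M 5 5 - M 0 2 * M 1 1 * M 2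 3 * M 3 0 * M 4 5 * M 5 4 - M 0 2 * M 1 1 * M 2 3 * M 3 4 * M 4 0 * M 5 5 + M 0 2 * M 1 1 * M 2 3 * M 3 4 * M 4 5 * M 5 0 + M 0 2 * M 1 1 * M 2 3 * M 3 5 * M 4 0 * M 5 4 - M 0 2 * M 1 1 * M 2 3 * M 3 5 * M 4 4 * M 5 0 - M 0 2 * M 1 1 * M 2 4 * M 3 0 * M 4 3 * M 5 5 + M 0 2 * M 1 1 * M 2 4 * M 3 0 * M 4 5 * M 5 3 + M 0 2 * M 1 1 * M 2 4 * M 3 3 * M 4 0 * M 5 5 - M 0 2 * M 1 1 * M 2 4 * M 3 3 * M 4 5 * M 5 0 - M 0 2 * M 1 1 * M 2 4 * M 3 5 * M 4 0 * M 5 3 + M 0 2 * M 1 1 * M 2 4 * M 3 5 * M 4 3 * M 5 0 + M 0 2 * M 1 1 * M 2 5 * M 3 0 * M 4 3 * M 5 4 - M 0 2 * M 1 1 * M 2 5 * M 3 0 * M 4 4 * M 5 3 - M 0 2 * M 1 1 * M 2 5 * M 3 3 * M 4 0 * M 5 4 + M 0 2 * M 1 1 * M 2 5 * M 3 3 * M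 4 4 * M 5 0 + M 0 2 * M 1 1 * M 2 5 * M 3 4 * M 4 0 * M 5 3 - M 0 2 * M 1 1 * M 2 5 * M 3 4 * M 4 3 * M 5 0 + M 0 2 * M 1 3 * M 2 0 * M 3 1 * M 4 4 * M 5 5 - M 0 2 * M 1 3 * M 2 0 * M 3 1 * M 4 5 * M 5 4 - M 0 2 * M 1 3 * M 2 0 * M 3 4 * M 4 1 * M 5 5 + M 0 2 * M 1 3 * M 2 0 * M 3 4 * M 4 5 * M 5 1 + M 0 2 * M 1 3 * M 2 0 * M 3 5 * M 4 1 * M 5 4 - M 0 2 * M 1 3 * M 2 0 * M 3 5 * M 4 4 * M 5 1 - M 0 2 * M 1 3 * M 2 1 * M 3 0 * M 4 4 * M 5 5 + M 0 2 * M 1 3 * M 2 1 * M 3 0 * M 4 5 * M 5 4 + M 0 2 * M 1 3 * M 2 1 * M 3 4 * M 4 0 * M 5 5 - M 0 2 * M 1 3 * M 2 1 * M 3 4 * M 4 5 * M 5 0 - M 0 2 * M 1 3 * M 2 1 * M 3 5 * M 4 0 * M 5 4 + M 0 2 * M 1 3 * M 2 1 * M 3 5 * M 4 4 * M 5 0 +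 M 0 2 * M 1 3 * M 2 4 * M 3 0 * M 4 1 * M 5 5 - M 0 2 * M 1 3 * M 2 4 * M 3 0 * M 4 5 * M 5 1 - M 0 2 * M 1 3 * M 2 4 * M 3 1 * M 4 0 * M 5 5 + M 0 2 * M 1 3 * M 2 4 * M 3 1 * M 4 5 * M 5 0 + M 0 2 * M 1 3 * M 2 4 * M 3 5 * M 4 0 * M 5 1 - M 0 2 * M 1 3 * M 2 4 * M 3 5 * M 4 1 * M 5 0 - M 0 2 * M 1 3 * M 2 5 * M 3 0 * M 4 1 * M 5 4 + M 0 2 * M 1 3 * M 2 5 * M 3 0 * M 4 4 * M 5 1 + M 0 2 * M 1 3 * M 2 5 * M 3 1 * M 4 0 * M 5 4 - M 0 2 * M 1 3 * M 2 5 * M 3 1 * M 4 4 * M 5 0 - M 0 2 * M 1 3 * M 2 5 * M 3 4 * M 4 0 * M 5 1 + M 0 2 * M 1 3 * M 2 5 * M 3 4 * M 4 1 * M 5 0 - M 0 2 * M 1 4 * M 2 0 * M 3 1 * M 4 3 * M 5 5 + M 0 2 * M 1 4 * M 2 0 * M 3 1 * M 4 5 * M 5 3 + M 0 2 * M 1 4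 * M 2 0 * M 3 3 * M 4 1 * M 5 5 - M 0 2 * M 1 4 * M 2 0 * M 3 3 * M 4 5 * M 5 1 - M 0 2 * M 1 4 * M 2 0 * M 3 5 * M 4 1 * M 5 3 + M 0 2 * M 1 4 * M 2 0 * M 3 5 * M 4 3 * M 5 1 + M 0 2 * M 1 4 * M 2 1 * M 3 0 * M 4 3 * M 5 5 - M 0 2 * M 1 4 * M 2 1 * M 3 0 * M 4 5 * M 5 3 - M 0 2 * M 1 4 * M 2 1 * M 3 3 * M 4 0 * M 5 5 + M 0 2 * M 1 4 * M 2 1 * M 3 3 * M 4 5 * M 5 0 + M 0 2 * M 1 4 * M 2 1 * M 3 5 * M 4 0 * M 5 3 - M 0 2 * M 1 4 * M 2 1 * M 3 5 * M 4 3 * M 5 0 - M 0 2 * M 1 4 * M 2 3 * M 3 0 * M 4 1 * M 5 5 + M 0 2 * M 1 4 * M 2 3 * M 3 0 * M 4 5 * M 5 1 + M 0 2 * M 1 4 * M 2 3 * M 3 1 * M 4 0 * M 5 5 - M 0 2 * M 1 4 * M 2 3 * M 3 1 * M 4 5 * M 5 0 - M 0 2 * M 1 4 * M 2 3 * M 3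 5 * M 4 0 * M 5 1 + M 0 2 * M 1 4 * M 2 3 * M 3 5 * M 4 1 * M 5 0 + M 0 2 * M 1 4 * M 2 5 * M 3 0 * M 4 1 * M 5 3 - M 0 2 * M 1 4 * M 2 5 * M 3 0 * M 4 3 * M 5 1 - M 0 2 * M 1 4 * M 2 5 * M 3 1 * M 4 0 * M 5 3 + M 0 2 * M 1 4 * M 2 5 * M 3 1 * M 4 3 * M 5 0 + M 0 2 * M 1 4 * M 2 5 * M 3 3 * M 4 0 * M 5 1 - M 0 2 * M 1 4 * M 2 5 * M 3 3 * M 4 1 * M 5 0 + M 0 2 * M 1 5 * M 2 0 * M 3 1 * M 4 3 * M 5 4 - M 0 2 * M 1 5 * M 2 0 * M 3 1 * M 4 4 * M 5 3 - M 0 2 * M 1 5 * M 2 0 * M 3 3 * M 4 1 * M 5 4 + M 0 2 * M 1 5 * M 2 0 * M 3 3 * M 4 4 * M 5 1 + M 0 2 * M 1 5 * M 2 0 * M 3 4 * M 4 1 * M 5 3 - M 0 2 * M 1 5 * M 2 0 * M 3 4 * M 4 3 * M 5 1 - M 0 2 * M 1 5 * M 2 1 * M 3 0 * M 4 3 * M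 5 4 + M 0 2 * M 1 5 * M 2 1 * M 3 0 * M 4 4 * M 5 3 + M 0 2 * M 1 5 * M 2 1 * M 3 3 * M 4 0 * M 5 4 - M 0 2 * M 1 5 * M 2 1 * M 3 3 * M 4 4 * M 5 0 - M 0 2 * M 1 5 * M 2 1 * M 3 4 * M 4 0 * M 5 3 + M 0 2 * M 1 5 * M 2 1 * M 3 4 * M 4 3 * M 5 0 + M 0 2 * M 1 5 * M 2 3 * M 3 0 * M 4 1 * M 5 4 - M 0 2 * M 1 5 * M 2 3 * M 3 0 * M 4 4 * M 5 1 - M 0 2 * M 1 5 * M 2 3 * M 3 1 * M 4 0 * M 5 4 + M 0 2 * M 1 5 * M 2 3 * M 3 1 * M 4 4 * M 5 0 + M 0 2 * M 1 5 * M 2 3 * M 3 4 * M 4 0 * M 5 1 - M 0 2 * M 1 5 * M 2 3 * M 3 4 * M 4 1 * M 5 0 - M 0 2 * M 1 5 * M 2 4 * M 3 0 * M 4 1 * M 5 3 + M 0 2 * M 1 5 * M 2 4 * M 3 0 * M 4 3 * M 5 1 + M 0 2 * M 1 5 * M 2 4 * M 3 1 * M 4 0 * M 5 3 - M 0 2 *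 M 1 5 * M 2 4 * M 3 1 * M 4 3 * M 5 0 - M 0 2 * M 1 5 * M 2 4 * M 3 3 * M 4 0 * M 5 1 + M 0 2 * M 1 5 * M 2 4 * M 3 3 * M 4 1 * M 5 0 - M 0 3 * M 1 0 * M 2 1 * M 3 2 * M 4 4 * M 5 5 + M 0 3 * M 1 0 * M 2 1 * M 3 2 * M 4 5 * M 5 4 + M 0 3 * M 1 0 * M 2 1 * M 3 4 * M 4 2 * M 5 5 - M 0 3 * M 1 0 * M 2 1 * M 3 4 * M 4 5 * M 5 2 - M 0 3 * M 1 0 * M 2 1 * M 3 5 * M 4 2 * M 5 4 + M 0 3 * M 1 0 * M 2 1 * M 3 5 * M 4 4 * M 5 2 + M 0 3 * M 1 0 * M 2 2 * M 3 1 * M 4 4 * M 5 5 - M 0 3 * M 1 0 * M 2 2 * M 3 1 * M 4 5 * M 5 4 - M 0 3 * M 1 0 * M 2 2 * M 3 4 * M 4 1 * M 5 5 + M 0 3 * M 1 0 * M 2 2 * M 3 4 * M 4 5 * M 5 1 + M 0 3 * M 1 0 * M 2 2 * M 3 5 * M 4 1 * M 5 4 - M 0 3 * M 1 0 * M 2 2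 * M 3 5 * M 4 4 * M 5 1 - M 0 3 * M 1 0 * M 2 4 * M 3 1 * M 4 2 * M 5 5 + M 0 3 * M 1 0 * M 2 4 * M 3 1 * M 4 5 * M 5 2 + M 0 3 * M 1 0 * M 2 4 * M 3 2 * M 4 1 * M 5 5 - M 0 3 * M 1 0 * M 2 4 * M 3 2 * M 4 5 * M 5 1 - M 0 3 * M 1 0 * M 2 4 * M 3 5 * M 4 1 * M 5 2 + M 0 3 * M 1 0 * M 2 4 * M 3 5 * M 4 2 * M 5 1 + M 0 3 * M 1 0 * M 2 5 * M 3 1 * M 4 2 * M 5 4 - M 0 3 * M 1 0 * M 2 5 * M 3 1 * M 4 4 * M 5 2 - M 0 3 * M 1 0 * M 2 5 * M 3 2 * M 4 1 * M 5 4 + M 0 3 * M 1 0 * M 2 5 * M 3 2 * M 4 4 * M 5 1 + M 0 3 * M 1 0 * M 2 5 * M 3 4 * M 4 1 * M 5 2 - M 0 3 * M 1 0 * M 2 5 * M 3 4 * M 4 2 * M 5 1 + M 0 3 * M 1 1 * M 2 0 * M 3 2 * M 4 4 * M 5 5 - M 0 3 * M 1 1 * M 2 0 * M 3 2 * M 4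 5 * M 5 4 - M 0 3 * M 1 1 * M 2 0 * M 3 4 * M 4 2 * M 5 5 + M 0 3 * M 1 1 * M 2 0 * M 3 4 * M 4 5 * M 5 2 + M 0 3 * M 1 1 * M 2 0 * M 3 5 * M 4 2 * M 5 4 - M 0 3 * M 1 1 * M 2 0 * M 3 5 * M 4 4 * M 5 2 - M 0 3 * M 1 1 * M 2 2 * M 3 0 * M 4 4 * M 5 5 + M 0 3 * M 1 1 * M 2 2 * M 3 0 * M 4 5 * M 5 4 + M 0 3 * M 1 1 * M 2 2 * M 3 4 * M 4 0 * M 5 5 - M 0 3 * M 1 1 * M 2 2 * M 3 4 * M 4 5 * M 5 0 - M 0 3 * M 1 1 * M 2 2 * M 3 5 * M 4 0 * M 5 4 + M 0 3 * M 1 1 * M 2 2 * M 3 5 * M 4 4 * M 5 0 + M 0 3 * M 1 1 * M 2 4 * M 3 0 * M 4 2 * M 5 5 - M 0 3 * M 1 1 * M 2 4 * M 3 0 * M 4 5 * M 5 2 - M 0 3 * M 1 1 * M 2 4 * M 3 2 * M 4 0 * M 5 5 + M 0 3 * M 1 1 * M 2 4 * M 3 2 * M 4 5 * M 5 0 + M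 0 3 * M 1 1 * M 2 4 * M 3 5 * M 4 0 * M 5 2 - M 0 3 * M 1 1 * M 2 4 * M 3 5 * M 4 2 * M 5 0 - M 0 3 * M 1 1 * M 2 5 * M 3 0 * M 4 2 * M 5 4 + M 0 3 * M 1 1 * M 2 5 * M 3 0 * M 4 4 * M 5 2 + M 0 3 * M 1 1 * M 2 5 * M 3 2 * M 4 0 * M 5 4 - M 0 3 * M 1 1 * M 2 5 * M 3 2 * M 4 4 * M 5 0 - M 0 3 * M 1 1 * M 2 5 * M 3 4 * M 4 0 * M 5 2 + M 0 3 * M 1 1 * M 2 5 * M 3 4 * M 4 2 * M 5 0 - M 0 3 * M 1 2 * M 2 0 * M 3 1 * M 4 4 * M 5 5 + M 0 3 * M 1 2 * M 2 0 * M 3 1 * M 4 5 * M 5 4 + M 0 3 * M 1 2 * M 2 0 * M 3 4 * M 4 1 * M 5 5 - M 0 3 * M 1 2 * M 2 0 * M 3 4 * M 4 5 * M 5 1 - M 0 3 * M 1 2 * M 2 0 * M 3 5 * M 4 1 * M 5 4 + M 0 3 * M 1 2 * M 2 0 * M 3 5 * M 4 4 * M 5 1 + M 0 3 * M 1 2 *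 M 2 1 * M 3 0 * M 4 4 * M 5 5 - M 0 3 * M 1 2 * M 2 1 * M 3 0 * M 4 5 * M 5 4 - M 0 3 * M 1 2 * M 2 1 * M 3 4 * M 4 0 * M 5 5 + M 0 3 * M 1 2 * M 2 1 * M 3 4 * M 4 5 * M 5 0 + M 0 3 * M 1 2 * M 2 1 * M 3 5 * M 4 0 * M 5 4 - M 0 3 * M 1 2 * M 2 1 * M 3 5 * M 4 4 * M 5 0 - M 0 3 * M 1 2 * M 2 4 * M 3 0 * M 4 1 * M 5 5 + M 0 3 * M 1 2 * M 2 4 * M 3 0 * M 4 5 * M 5 1 + M 0 3 * M 1 2 * M 2 4 * M 3 1 * M 4 0 * M 5 5 - M 0 3 * M 1 2 * M 2 4 * M 3 1 * M 4 5 * M 5 0 - M 0 3 * M 1 2 * M 2 4 * M 3 5 * M 4 0 * M 5 1 + M 0 3 * M 1 2 * M 2 4 * M 3 5 * M 4 1 * M 5 0 + M 0 3 * M 1 2 * M 2 5 * M 3 0 * M 4 1 * M 5 4 - M 0 3 * M 1 2 * M 2 5 * M 3 0 * M 4 4 * M 5 1 - M 0 3 * M 1 2 * M 2 5 * M 3 1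 * M 4 0 * M 5 4 + M 0 3 * M 1 2 * M 2 5 * M 3 1 * M 4 4 * M 5 0 + M 0 3 * M 1 2 * M 2 5 * M 3 4 * M 4 0 * M 5 1 - M 0 3 * M 1 2 * M 2 5 * M 3 4 * M 4 1 * M 5 0 + M 0 3 * M 1 4 * M 2 0 * M 3 1 * M 4 2 * M 5 5 - M 0 3 * M 1 4 * M 2 0 * M 3 1 * M 4 5 * M 5 2 - M 0 3 * M 1 4 * M 2 0 * M 3 2 * M 4 1 * M 5 5 + M 0 3 * M 1 4 * M 2 0 * M 3 2 * M 4 5 * M 5 1 + M 0 3 * M 1 4 * M 2 0 * M 3 5 * M 4 1 * M 5 2 - M 0 3 * M 1 4 * M 2 0 * M 3 5 * M 4 2 * M 5 1 - M 0 3 * M 1 4 * M 2 1 * M 3 0 * M 4 2 * M 5 5 + M 0 3 * M 1 4 * M 2 1 * M 3 0 * M 4 5 * M 5 2 + M 0 3 * M 1 4 * M 2 1 * M 3 2 * M 4 0 * M 5 5 - M 0 3 * M 1 4 * M 2 1 * M 3 2 * M 4 5 * M 5 0 - M 0 3 * M 1 4 * M 2 1 * M 3 5 * M 4 0 * M 5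 2 + M 0 3 * M 1 4 * M 2 1 * M 3 5 * M 4 2 * M 5 0 + M 0 3 * M 1 4 * M 2 2 * M 3 0 * M 4 1 * M 5 5 - M 0 3 * M 1 4 * M 2 2 * M 3 0 * M 4 5 * M 5 1 - M 0 3 * M 1 4 * M 2 2 * M 3 1 * M 4 0 * M 5 5 + M 0 3 * M 1 4 * M 2 2 * M 3 1 * M 4 5 * M 5 0 + M 0 3 * M 1 4 * M 2 2 * M 3 5 * M 4 0 * M 5 1 - M 0 3 * M 1 4 * M 2 2 * M 3 5 * M 4 1 * M 5 0 - M 0 3 * M 1 4 * M 2 5 * M 3 0 * M 4 1 * M 5 2 + M 0 3 * M 1 4 * M 2 5 * M 3 0 * M 4 2 * M 5 1 + M 0 3 * M 1 4 * M 2 5 * M 3 1 * M 4 0 * M 5 2 - M 0 3 * M 1 4 * M 2 5 * M 3 1 * M 4 2 * M 5 0 - M 0 3 * M 1 4 * M 2 5 * M 3 2 * M 4 0 * M 5 1 + M 0 3 * M 1 4 * M 2 5 * M 3 2 * M 4 1 * M 5 0 - M 0 3 * M 1 5 * M 2 0 * M 3 1 * M 4 2 * M 5 4 + M 0 3 * M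 1 5 * M 2 0 * M 3 1 * M 4 4 * M 5 2 + M 0 3 * M 1 5 * M 2 0 * M 3 2 * M 4 1 * M 5 4 - M 0 3 * M 1 5 * M 2 0 * M 3 2 * M 4 4 * M 5 1 - M 0 3 * M 1 5 * M 2 0 * M 3 4 * M 4 1 * M 5 2 + M 0 3 * M 1 5 * M 2 0 * M 3 4 * M 4 2 * M 5 1 + M 0 3 * M 1 5 * M 2 1 * M 3 0 * M 4 2 * M 5 4 - M 0 3 * M 1 5 * M 2 1 * M 3 0 * M 4 4 * M 5 2 - M 0 3 * M 1 5 * M 2 1 * M 3 2 * M 4 0 * M 5 4 + M 0 3 * M 1 5 * M 2 1 * M 3 2 * M 4 4 * M 5 0 + M 0 3 * M 1 5 * M 2 1 * M 3 4 * M 4 0 * M 5 2 - M 0 3 * M 1 5 * M 2 1 * M 3 4 * M 4 2 * M 5 0 - M 0 3 * M 1 5 * M 2 2 * M 3 0 * M 4 1 * M 5 4 + M 0 3 * M 1 5 * M 2 2 * M 3 0 * M 4 4 * M 5 1 + M 0 3 * M 1 5 * M 2 2 * M 3 1 * M 4 0 * M 5 4 - M 0 3 * M 1 5 * M 2 2 *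 M 3 1 * M 4 4 * M 5 0 - M 0 3 * M 1 5 * M 2 2 * M 3 4 * M 4 0 * M 5 1 + M 0 3 * M 1 5 * M 2 2 * M 3 4 * M 4 1 * M 5 0 + M 0 3 * M 1 5 * M 2 4 * M 3 0 * M 4 1 * M 5 2 - M 0 3 * M 1 5 * M 2 4 * M 3 0 * M 4 2 * M 5 1 - M 0 3 * M 1 5 * M 2 4 * M 3 1 * M 4 0 * M 5 2 + M 0 3 * M 1 5 * M 2 4 * M 3 1 * M 4 2 * M 5 0 + M 0 3 * M 1 5 * M 2 4 * M 3 2 * M 4 0 * M 5 1 - M 0 3 * M 1 5 * M 2 4 * M 3 2 * M 4 1 * M 5 0 + M 0 4 * M 1 0 * M 2 1 * M 3 2 * M 4 3 * M 5 5 - M 0 4 * M 1 0 * M 2 1 * M 3 2 * M 4 5 * M 5 3 - M 0 4 * M 1 0 * M 2 1 * M 3 3 * M 4 2 * M 5 5 + M 0 4 * M 1 0 * M 2 1 * M 3 3 * M 4 5 * M 5 2 + M 0 4 * M 1 0 * M 2 1 * M 3 5 * M 4 2 * M 5 3 - M 0 4 * M 1 0 * M 2 1 * M 3 5 * M 4 3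 * M 5 2 - M 0 4 * M 1 0 * M 2 2 * M 3 1 * M 4 3 * M 5 5 + M 0 4 * M 1 0 * M 2 2 * M 3 1 * M 4 5 * M 5 3 + M 0 4 * M 1 0 * M 2 2 * M 3 3 * M 4 1 * M 5 5 - M 0 4 * M 1 0 * M 2 2 * M 3 3 * M 4 5 * M 5 1 - M 0 4 * M 1 0 * M 2 2 * M 3 5 * M 4 1 * M 5 3 + M 0 4 * M 1 0 * M 2 2 * M 3 5 * M 4 3 * M 5 1 + M 0 4 * M 1 0 * M 2 3 * M 3 1 * M 4 2 * M 5 5 - M 0 4 * M 1 0 * M 2 3 * M 3 1 * M 4 5 * M 5 2 - M 0 4 * M 1 0 * M 2 3 * M 3 2 * M 4 1 * M 5 5 + M 0 4 * M 1 0 * M 2 3 * M 3 2 * M 4 5 * M 5 1 + M 0 4 * M 1 0 * M 2 3 * M 3 5 * M 4 1 * M 5 2 - M 0 4 * M 1 0 * M 2 3 * M 3 5 * M 4 2 * M 5 1 - M 0 4 * M 1 0 * M 2 5 * M 3 1 * M 4 2 * M 5 3 + M 0 4 * M 1 0 * M 2 5 * M 3 1 * M 4 3 * M 5 2 + M 0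 4 * M 1 0 * M 2 5 * M 3 2 * M 4 1 * M 5 3 - M 0 4 * M 1 0 * M 2 5 * M 3 2 * M 4 3 * M 5 1 - M 0 4 * M 1 0 * M 2 5 * M 3 3 * M 4 1 * M 5 2 + M 0 4 * M 1 0 * M 2 5 * M 3 3 * M 4 2 * M 5 1 - M 0 4 * M 1 1 * M 2 0 * M 3 2 * M 4 3 * M 5 5 + M 0 4 * M 1 1 * M 2 0 * M 3 2 * M 4 5 * M 5 3 + M 0 4 * M 1 1 * M 2 0 * M 3 3 * M 4 2 * M 5 5 - M 0 4 * M 1 1 * M 2 0 * M 3 3 * M 4 5 * M 5 2 - M 0 4 * M 1 1 * M 2 0 * M 3 5 * M 4 2 * M 5 3 + M 0 4 * M 1 1 * M 2 0 * M 3 5 * M 4 3 * M 5 2 + M 0 4 * M 1 1 * M 2 2 * M 3 0 * M 4 3 * M 5 5 - M 0 4 * M 1 1 * M 2 2 * M 3 0 * M 4 5 * M 5 3 - M 0 4 * M 1 1 * M 2 2 * M 3 3 * M 4 0 * M 5 5 + M 0 4 * M 1 1 * M 2 2 * M 3 3 * M 4 5 * M 5 0 + M 0 4 * M 1 1 * M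 2 2 * M 3 5 * M 4 0 * M 5 3 - M 0 4 * M 1 1 * M 2 2 * M 3 5 * M 4 3 * M 5 0 - M 0 4 * M 1 1 * M 2 3 * M 3 0 * M 4 2 * M 5 5 + M 0 4 * M 1 1 * M 2 3 * M 3 0 * M 4 5 * M 5 2 + M 0 4 * M 1 1 * M 2 3 * M 3 2 * M 4 0 * M 5 5 - M 0 4 * M 1 1 * M 2 3 * M 3 2 * M 4 5 * M 5 0 - M 0 4 * M 1 1 * M 2 3 * M 3 5 * M 4 0 * M 5 2 + M 0 4 * M 1 1 * M 2 3 * M 3 5 * M 4 2 * M 5 0 + M 0 4 * M 1 1 * M 2 5 * M 3 0 * M 4 2 * M 5 3 - M 0 4 * M 1 1 * M 2 5 * M 3 0 * M 4 3 * M 5 2 - M 0 4 * M 1 1 * M 2 5 * M 3 2 * M 4 0 * M 5 3 + M 0 4 * M 1 1 * M 2 5 * M 3 2 * M 4 3 * M 5 0 + M 0 4 * M 1 1 * M 2 5 * M 3 3 * M 4 0 * M 5 2 - M 0 4 * M 1 1 * M 2 5 * M 3 3 * M 4 2 * M 5 0 + M 0 4 * M 1 2 * M 2 0 * M 3 1 *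 M 4 3 * M 5 5 - M 0 4 * M 1 2 * M 2 0 * M 3 1 * M 4 5 * M 5 3 - M 0 4 * M 1 2 * M 2 0 * M 3 3 * M 4 1 * M 5 5 + M 0 4 * M 1 2 * M 2 0 * M 3 3 * M 4 5 * M 5 1 + M 0 4 * M 1 2 * M 2 0 * M 3 5 * M 4 1 * M 5 3 - M 0 4 * M 1 2 * M 2 0 * M 3 5 * M 4 3 * M 5 1 - M 0 4 * M 1 2 * M 2 1 * M 3 0 * M 4 3 * M 5 5 + M 0 4 * M 1 2 * M 2 1 * M 3 0 * M 4 5 * M 5 3 + M 0 4 * M 1 2 * M 2 1 * M 3 3 * M 4 0 * M 5 5 - M 0 4 * M 1 2 * M 2 1 * M 3 3 * M 4 5 * M 5 0 - M 0 4 * M 1 2 * M 2 1 * M 3 5 * M 4 0 * M 5 3 + M 0 4 * M 1 2 * M 2 1 * M 3 5 * M 4 3 * M 5 0 + M 0 4 * M 1 2 * M 2 3 * M 3 0 * M 4 1 * M 5 5 - M 0 4 * M 1 2 * M 2 3 * M 3 0 * M 4 5 * M 5 1 - M 0 4 * M 1 2 * M 2 3 * M 3 1 * M 4 0 * M 5 5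 + M 0 4 * M 1 2 * M 2 3 * M 3 1 * M 4 5 * M 5 0 + M 0 4 * M 1 2 * M 2 3 * M 3 5 * M 4 0 * M 5 1 - M 0 4 * M 1 2 * M 2 3 * M 3 5 * M 4 1 * M 5 0 - M 0 4 * M 1 2 * M 2 5 * M 3 0 * M 4 1 * M 5 3 + M 0 4 * M 1 2 * M 2 5 * M 3 0 * M 4 3 * M 5 1 + M 0 4 * M 1 2 * M 2 5 * M 3 1 * M 4 0 * M 5 3 - M 0 4 * M 1 2 * M 2 5 * M 3 1 * M 4 3 * M 5 0 - M 0 4 * M 1 2 * M 2 5 * M 3 3 * M 4 0 * M 5 1 + M 0 4 * M 1 2 * M 2 5 * M 3 3 * M 4 1 * M 5 0 - M 0 4 * M 1 3 * M 2 0 * M 3 1 * M 4 2 * M 5 5 + M 0 4 * M 1 3 * M 2 0 * M 3 1 * M 4 5 * M 5 2 + M 0 4 * M 1 3 * M 2 0 * M 3 2 * M 4 1 * M 5 5 - M 0 4 * M 1 3 * M 2 0 * M 3 2 * M 4 5 * M 5 1 - M 0 4 * M 1 3 * M 2 0 * M 3 5 * M 4 1 * M 5 2 + M 0 4 * M 1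 3 * M 2 0 * M 3 5 * M 4 2 * M 5 1 + M 0 4 * M 1 3 * M 2 1 * M 3 0 * M 4 2 * M 5 5 - M 0 4 * M 1 3 * M 2 1 * M 3 0 * M 4 5 * M 5 2 - M 0 4 * M 1 3 * M 2 1 * M 3 2 * M 4 0 * M 5 5 + M 0 4 * M 1 3 * M 2 1 * M 3 2 * M 4 5 * M 5 0 + M 0 4 * M 1 3 * M 2 1 * M 3 5 * M 4 0 * M 5 2 - M 0 4 * M 1 3 * M 2 1 * M 3 5 * M 4 2 * M 5 0 - M 0 4 * M 1 3 * M 2 2 * M 3 0 * M 4 1 * M 5 5 + M 0 4 * M 1 3 * M 2 2 * M 3 0 * M 4 5 * M 5 1 + M 0 4 * M 1 3 * M 2 2 * M 3 1 * M 4 0 * M 5 5 - M 0 4 * M 1 3 * M 2 2 * M 3 1 * M 4 5 * M 5 0 - M 0 4 * M 1 3 * M 2 2 * M 3 5 * M 4 0 * M 5 1 + M 0 4 * M 1 3 * M 2 2 * M 3 5 * M 4 1 * M 5 0 + M 0 4 * M 1 3 * M 2 5 * M 3 0 * M 4 1 * M 5 2 - M 0 4 * M 1 3 * M 2 5 * M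 3 0 * M 4 2 * M 5 1 - M 0 4 * M 1 3 * M 2 5 * M 3 1 * M 4 0 * M 5 2 + M 0 4 * M 1 3 * M 2 5 * M 3 1 * M 4 2 * M 5 0 + M 0 4 * M 1 3 * M 2 5 * M 3 2 * M 4 0 * M 5 1 - M 0 4 * M 1 3 * M 2 5 * M 3 2 * M 4 1 * M 5 0 + M 0 4 * M 1 5 * M 2 0 * M 3 1 * M 4 2 * M 5 3 - M 0 4 * M 1 5 * M 2 0 * M 3 1 * M 4 3 * M 5 2 - M 0 4 * M 1 5 * M 2 0 * M 3 2 * M 4 1 * M 5 3 + M 0 4 * M 1 5 * M 2 0 * M 3 2 * M 4 3 * M 5 1 + M 0 4 * M 1 5 * M 2 0 * M 3 3 * M 4 1 * M 5 2 - M 0 4 * M 1 5 * M 2 0 * M 3 3 * M 4 2 * M 5 1 - M 0 4 * M 1 5 * M 2 1 * M 3 0 * M 4 2 * M 5 3 + M 0 4 * M 1 5 * M 2 1 * M 3 0 * M 4 3 * M 5 2 + M 0 4 * M 1 5 * M 2 1 * M 3 2 * M 4 0 * M 5 3 - M 0 4 * M 1 5 * M 2 1 * M 3 2 * M 4 3 *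 M 5 0 - M 0 4 * M 1 5 * M 2 1 * M 3 3 * M 4 0 * M 5 2 + M 0 4 * M 1 5 * M 2 1 * M 3 3 * M 4 2 * M 5 0 + M 0 4 * M 1 5 * M 2 2 * M 3 0 * M 4 1 * M 5 3 - M 0 4 * M 1 5 * M 2 2 * M 3 0 * M 4 3 * M 5 1 - M 0 4 * M 1 5 * M 2 2 * M 3 1 * M 4 0 * M 5 3 + M 0 4 * M 1 5 * M 2 2 * M 3 1 * M 4 3 * M 5 0 + M 0 4 * M 1 5 * M 2 2 * M 3 3 * M 4 0 * M 5 1 - M 0 4 * M 1 5 * M 2 2 * M 3 3 * M 4 1 * M 5 0 - M 0 4 * M 1 5 * M 2 3 * M 3 0 * M 4 1 * M 5 2 + M 0 4 * M 1 5 * M 2 3 * M 3 0 * M 4 2 * M 5 1 + M 0 4 * M 1 5 * M 2 3 * M 3 1 * M 4 0 * M 5 2 - M 0 4 * M 1 5 * M 2 3 * M 3 1 * M 4 2 * M 5 0 - M 0 4 * M 1 5 * M 2 3 * M 3 2 * M 4 0 * M 5 1 + M 0 4 * M 1 5 * M 2 3 * M 3 2 * M 4 1 * M 5 0 - M 0 5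 * M 1 0 * M 2 1 * M 3 2 * M 4 3 * M 5 4 + M 0 5 * M 1 0 * M 2 1 * M 3 2 * M 4 4 * M 5 3 + M 0 5 * M 1 0 * M 2 1 * M 3 3 * M 4 2 * M 5 4 - M 0 5 * M 1 0 * M 2 1 * M 3 3 * M 4 4 * M 5 2 - M 0 5 * M 1 0 * M 2 1 * M 3 4 * M 4 2 * M 5 3 + M 0 5 * M 1 0 * M 2 1 * M 3 4 * M 4 3 * M 5 2 + M 0 5 * M 1 0 * M 2 2 * M 3 1 * M 4 3 * M 5 4 - M 0 5 * M 1 0 * M 2 2 * M 3 1 * M 4 4 * M 5 3 - M 0 5 * M 1 0 * M 2 2 * M 3 3 * M 4 1 * M 5 4 + M 0 5 * M 1 0 * M 2 2 * M 3 3 * M 4 4 * M 5 1 + M 0 5 * M 1 0 * M 2 2 * M 3 4 * M 4 1 * M 5 3 - M 0 5 * M 1 0 * M 2 2 * M 3 4 * M 4 3 * M 5 1 - M 0 5 * M 1 0 * M 2 3 * M 3 1 * M 4 2 * M 5 4 + M 0 5 * M 1 0 * M 2 3 * M 3 1 * M 4 4 * M 5 2 + M 0 5 * M 1 0 * M 2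 3 * M 3 2 * M 4 1 * M 5 4 - M 0 5 * M 1 0 * M 2 3 * M 3 2 * M 4 4 * M 5 1 - M 0 5 * M 1 0 * M 2 3 * M 3 4 * M 4 1 * M 5 2 + M 0 5 * M 1 0 * M 2 3 * M 3 4 * M 4 2 * M 5 1 + M 0 5 * M 1 0 * M 2 4 * M 3 1 * M 4 2 * M 5 3 - M 0 5 * M 1 0 * M 2 4 * M 3 1 * M 4 3 * M 5 2 - M 0 5 * M 1 0 * M 2 4 * M 3 2 * M 4 1 * M 5 3 + M 0 5 * M 1 0 * M 2 4 * M 3 2 * M 4 3 * M 5 1 + M 0 5 * M 1 0 * M 2 4 * M 3 3 * M 4 1 * M 5 2 - M 0 5 * M 1 0 * M 2 4 * M 3 3 * M 4 2 * M 5 1 + M 0 5 * M 1 1 * M 2 0 * M 3 2 * M 4 3 * M 5 4 - M 0 5 * M 1 1 * M 2 0 * M 3 2 * M 4 4 * M 5 3 - M 0 5 * M 1 1 * M 2 0 * M 3 3 * M 4 2 * M 5 4 + M 0 5 * M 1 1 * M 2 0 * M 3 3 * M 4 4 * M 5 2 + M 0 5 * M 1 1 * M 2 0 * M 3 4 * M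 4 2 * M 5 3 - M 0 5 * M 1 1 * M 2 0 * M 3 4 * M 4 3 * M 5 2 - M 0 5 * M 1 1 * M 2 2 * M 3 0 * M 4 3 * M 5 4 + M 0 5 * M 1 1 * M 2 2 * M 3 0 * M 4 4 * M 5 3 + M 0 5 * M 1 1 * M 2 2 * M 3 3 * M 4 0 * M 5 4 - M 0 5 * M 1 1 * M 2 2 * M 3 3 * M 4 4 * M 5 0 - M 0 5 * M 1 1 * M 2 2 * M 3 4 * M 4 0 * M 5 3 + M 0 5 * M 1 1 * M 2 2 * M 3 4 * M 4 3 * M 5 0 + M 0 5 * M 1 1 * M 2 3 * M 3 0 * M 4 2 * M 5 4 - M 0 5 * M 1 1 * M 2 3 * M 3 0 * M 4 4 * M 5 2 - M 0 5 * M 1 1 * M 2 3 * M 3 2 * M 4 0 * M 5 4 + M 0 5 * M 1 1 * M 2 3 * M 3 2 * M 4 4 * M 5 0 + M 0 5 * M 1 1 * M 2 3 * M 3 4 * M 4 0 * M 5 2 - M 0 5 * M 1 1 * M 2 3 * M 3 4 * M 4 2 * M 5 0 - M 0 5 * M 1 1 * M 2 4 * M 3 0 * M 4 2 * M 5 3 +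 M 0 5 * M 1 1 * M 2 4 * M 3 0 * M 4 3 * M 5 2 + M 0 5 * M 1 1 * M 2 4 * M 3 2 * M 4 0 * M 5 3 - M 0 5 * M 1 1 * M 2 4 * M 3 2 * M 4 3 * M 5 0 - M 0 5 * M 1 1 * M 2 4 * M 3 3 * M 4 0 * M 5 2 + M 0 5 * M 1 1 * M 2 4 * M 3 3 * M 4 2 * M 5 0 - M 0 5 * M 1 2 * M 2 0 * M 3 1 * M 4 3 * M 5 4 + M 0 5 * M 1 2 * M 2 0 * M 3 1 * M 4 4 * M 5 3 + M 0 5 * M 1 2 * M 2 0 * M 3 3 * M 4 1 * M 5 4 - M 0 5 * M 1 2 * M 2 0 * M 3 3 * M 4 4 * M 5 1 - M 0 5 * M 1 2 * M 2 0 * M 3 4 * M 4 1 * M 5 3 + M 0 5 * M 1 2 * M 2 0 * M 3 4 * M 4 3 * M 5 1 + M 0 5 * M 1 2 * M 2 1 * M 3 0 * M 4 3 * M 5 4 - M 0 5 * M 1 2 * M 2 1 * M 3 0 * M 4 4 * M 5 3 - M 0 5 * M 1 2 * M 2 1 * M 3 3 * M 4 0 * M 5 4 + M 0 5 * M 1 2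 * M 2 1 * M 3 3 * M 4 4 * M 5 0 + M 0 5 * M 1 2 * M 2 1 * M 3 4 * M 4 0 * M 5 3 - M 0 5 * M 1 2 * M 2 1 * M 3 4 * M 4 3 * M 5 0 - M 0 5 * M 1 2 * M 2 3 * M 3 0 * M 4 1 * M 5 4 + M 0 5 * M 1 2 * M 2 3 * M 3 0 * M 4 4 * M 5 1 + M 0 5 * M 1 2 * M 2 3 * M 3 1 * M 4 0 * M 5 4 - M 0 5 * M 1 2 * M 2 3 * M 3 1 * M 4 4 * M 5 0 - M 0 5 * M 1 2 * M 2 3 * M 3 4 * M 4 0 * M 5 1 + M 0 5 * M 1 2 * M 2 3 * M 3 4 * M 4 1 * M 5 0 + M 0 5 * M 1 2 * M 2 4 * M 3 0 * M 4 1 * M 5 3 - M 0 5 * M 1 2 * M 2 4 * M 3 0 * M 4 3 * M 5 1 - M 0 5 * M 1 2 * M 2 4 * M 3 1 * M 4 0 * M 5 3 + M 0 5 * M 1 2 * M 2 4 * M 3 1 * M 4 3 * M 5 0 + M 0 5 * M 1 2 * M 2 4 * M 3 3 * M 4 0 * M 5 1 - M 0 5 * M 1 2 * M 2 4 * M 3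 3 * M 4 1 * M 5 0 + M 0 5 * M 1 3 * M 2 0 * M 3 1 * M 4 2 * M 5 4 - M 0 5 * M 1 3 * M 2 0 * M 3 1 * M 4 4 * M 5 2 - M 0 5 * M 1 3 * M 2 0 * M 3 2 * M 4 1 * M 5 4 + M 0 5 * M 1 3 * M 2 0 * M 3 2 * M 4 4 * M 5 1 + M 0 5 * M 1 3 * M 2 0 * M 3 4 * M 4 1 * M 5 2 - M 0 5 * M 1 3 * M 2 0 * M 3 4 * M 4 2 * M 5 1 - M 0 5 * M 1 3 * M 2 1 * M 3 0 * M 4 2 * M 5 4 + M 0 5 * M 1 3 * M 2 1 * M 3 0 * M 4 4 * M 5 2 + M 0 5 * M 1 3 * M 2 1 * M 3 2 * M 4 0 * M 5 4 - M 0 5 * M 1 3 * M 2 1 * M 3 2 * M 4 4 * M 5 0 - M 0 5 * M 1 3 * M 2 1 * M 3 4 * M 4 0 * M 5 2 + M 0 5 * M 1 3 * M 2 1 * M 3 4 * M 4 2 * M 5 0 + M 0 5 * M 1 3 * M 2 2 * M 3 0 * M 4 1 * M 5 4 - M 0 5 * M 1 3 * M 2 2 * M 3 0 * M 4 4 * M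 5 1 - M 0 5 * M 1 3 * M 2 2 * M 3 1 * M 4 0 * M 5 4 + M 0 5 * M 1 3 * M 2 2 * M 3 1 * M 4 4 * M 5 0 + M 0 5 * M 1 3 * M 2 2 * M 3 4 * M 4 0 * M 5 1 - M 0 5 * M 1 3 * M 2 2 * M 3 4 * M 4 1 * M 5 0 - M 0 5 * M 1 3 * M 2 4 * M 3 0 * M 4 1 * M 5 2 + M 0 5 * M 1 3 * M 2 4 * M 3 0 * M 4 2 * M 5 1 + M 0 5 * M 1 3 * M 2 4 * M 3 1 * M 4 0 * M 5 2 - M 0 5 * M 1 3 * M 2 4 * M 3 1 * M 4 2 * M 5 0 - M 0 5 * M 1 3 * M 2 4 * M 3 2 * M 4 0 * M 5 1 + M 0 5 * M 1 3 * M 2 4 * M 3 2 * M 4 1 * M 5 0 - M 0 5 * M 1 4 * M 2 0 * M 3 1 * M 4 2 * M 5 3 + M 0 5 * M 1 4 * M 2 0 * M 3 1 * M 4 3 * M 5 2 + M 0 5 * M 1 4 * M 2 0 * M 3 2 * M 4 1 * M 5 3 - M 0 5 * M 1 4 * M 2 0 * M 3 2 * M 4 3 * M 5 1 - M 0 5 *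 M 1 4 * M 2 0 * M 3 3 * M 4 1 * M 5 2 + M 0 5 * M 1 4 * M 2 0 * M 3 3 * M 4 2 * M 5 1 + M 0 5 * M 1 4 * M 2 1 * M 3 0 * M 4 2 * M 5 3 - M 0 5 * M 1 4 * M 2 1 * M 3 0 * M 4 3 * M 5 2 - M 0 5 * M 1 4 * M 2 1 * M 3 2 * M 4 0 * M 5 3 + M 0 5 * M 1 4 * M 2 1 * M 3 2 * M 4 3 * M 5 0 + M 0 5 * M 1 4 * M 2 1 * M 3 3 * M 4 0 * M 5 2 - M 0 5 * M 1 4 * M 2 1 * M 3 3 * M 4 2 * M 5 0 - M 0 5 * M 1 4 * M 2 2 * M 3 0 * M 4 1 * M 5 3 + M 0 5 * M 1 4 * M 2 2 * M 3 0 * M 4 3 * M 5 1 + M 0 5 * M 1 4 * M 2 2 * M 3 1 * M 4 0 * M 5 3 - M 0 5 * M 1 4 * M 2 2 * M 3 1 * M 4 3 * M 5 0 - M 0 5 * M 1 4 * M 2 2 * M 3 3 * M 4 0 * M 5 1 + M 0 5 * M 1 4 * M 2 2 * M 3 3 * M 4 1 * M 5 0 + M 0 5 * M 1 4 * M 2 3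 * M 3 0 * M 4 1 * M 5 2 - M 0 5 * M 1 4 * M 2 3 * M 3 0 * M 4 2 * M 5 1 - M 0 5 * M 1 4 * M 2 3 * M 3 1 * M 4 0 * M 5 2 + M 0 5 * M 1 4 * M 2 3 * M 3 1 * M 4 2 * M 5 0 + M 0 5 * M 1 4 * M 2 3 * M 3 2 * M 4 0 * M 5 1 - M 0 5 * M 1 4 * M 2 3 * M 3 2 * M 4 1 * M 5 0 := by
  rw [Matrix.det_succ_row_zero]
  simp only [Fin.sum_univ_six, det_fin_five', Matrix.submatrix_apply,
    show Fin.succ (0:Fin 5) = (1:Fin 6) from rfl,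
    show Fin.succ (1:Fin 5) = (2:Fin 6) from rfl,
    show Fin.succ (2:Fin 5) = (3:Fin 6) from rfl,
    show Fin.succ (3:Fin 5) = (4:Fin 6) from rfl,
    show Fin.succ (4:Fin 5) = (5:Fin 6) from rfl,
    show Fin.succAbove (0:Fin 6) (0:Fin 5) = (1:Fin 6) from rfl,
    show Fin.succAbove (0:Fin 6) (1:Fin 5) = (2:Fin 6) from rfl,
    show Fin.succAbove (0:Fin 6) (2:Fin 5) = (3:Fin 6) from rfl,
    show Fin.succAbove (0:Fin 6) (3:Fin 5) = (4:Fin 6) from rfl,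
    show Fin.succAbove (0:Fin 6) (4:Fin 5) = (5:Fin 6) from rfl,
    show (((0:Fin 6):ℕ)) = 0 from rfl,
    show Fin.succAbove (1:Fin 6) (0:Fin 5) = (0:Fin 6) from rfl,
    show Fin.succAbove (1:Fin 6) (1:Fin 5) = (2:Fin 6) from rfl,
    show Fin.succAbove (1:Fin 6) (2:Fin 5) = (3:Fin 6) from rfl,
    show Fin.succAbove (1:Fin 6) (3:Fin 5) = (4:Fin 6) from rfl,
    show Fin.succAbove (1:Fin 6) (4:Fin 5) = (5:Fin 6) from rfl,
    show (((1:Fin 6):ℕ)) = 1 from rfl,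
    show Fin.succAbove (2:Fin 6) (0:Fin 5) = (0:Fin 6) from rfl,
    show Fin.succAbove (2:Fin 6) (1:Fin 5) = (1:Fin 6) from rfl,
    show Fin.succAbove (2:Fin 6) (2:Fin 5) = (3:Fin 6) from rfl,
    show Fin.succAbove (2:Fin 6) (3:Fin 5) = (4:Fin 6) from rfl,
    show Fin.succAbove (2:Fin 6) (4:Fin 5) = (5:Fin 6) from rfl,
    show (((2:Fin 6):ℕ)) = 2 from rfl,
    show Fin.succAbove (3:Fin 6) (0:Fin 5) = (0:Fin 6) from rfl,
    show Fin.succAbove (3:Fin 6) (1:Fin 5) = (1:Fin 6) from rfl,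
    show Fin.succAbove (3:Fin 6) (2:Fin 5) = (2:Fin 6) from rfl,
    show Fin.succAbove (3:Fin 6) (3:Fin 5) = (4:Fin 6) from rfl,
    show Fin.succAbove (3:Fin 6) (4:Fin 5) = (5:Fin 6) from rfl,
    show (((3:Fin 6):ℕ)) = 3 from rfl,
    show Fin.succAbove (4:Fin 6) (0:Fin 5) = (0:Fin 6) from rfl,
    show Fin.succAbove (4:Fin 6) (1:Fin 5) = (1:Fin 6) from rfl,
    show Fin.succAbove (4:Fin 6) (2:Fin 5) = (2:Fin 6) from rfl,
    show Fin.succAbove (4:Fin 6) (3:Fin 5) = (3:Fin 6) from rfl,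
    show Fin.succAbove (4:Fin 6) (4:Fin 5) = (5:Fin 6) from rfl,
    show (((4:Fin 6):ℕ)) = 4 from rfl,
    show Fin.succAbove (5:Fin 6) (0:Fin 5) = (0:Fin 6) from rfl,
    show Fin.succAbove (5:Fin 6) (1:Fin 5) = (1:Fin 6) from rfl,
    show Fin.succAbove (5:Fin 6) (2:Fin 5) = (2:Fin 6) from rfl,
    show Fin.succAbove (5:Fin 6) (3:Fin 5) = (3:Fin 6) from rfl,
    show Fin.succAbove (5:Fin 6) (4:Fin 5) = (4:Fin 6) from rfl,
    show (((5:Fin 6):ℕ)) = 5 from rfl]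
  ring



/-- `Δ_{abc}`: the determinant of the `3 × 3` matrix whose columns are `v a`, `v b`, `v c`. -/
def Δ3 {F : Type*} [Field F] {N : ℕ} (v : Fin N → Fin 3 → F) (a b c : Fin N) : F :=
  Matrix.det (Matrix.of fun i j => ![v a, v b, v c] j i)

/-- The Veronese polynomial `V = Δ₁₂₃Δ₃₄₅Δ₅₆₁Δ₂₄₆ - Δ₂₃₄Δ₄₅₆Δ₆₁₂Δ₃₅₁`
(labels `1, …, 6` correspond to indices `0, …, 5`). -/
def Ver {F : Type*} [Field F] (v : Fin 6 → Fin 3 → F) : F :=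
  Δ3 v 0 1 2 * Δ3 v 2 3 4 * Δ3 v 4 5 0 * Δ3 v 1 3 5 -
    Δ3 v 1 2 3 * Δ3 v 3 4 5 * Δ3 v 5 0 1 * Δ3 v 2 4 0

lemma vec3_0 {α : Type*} (a b c : α) : ![a,b,c] (0:Fin 3) = a := rfl
lemma vec3_1 {α : Type*} (a b c : α) : ![a,b,c] (1:Fin 3) = b := rfl
lemma vec3_2 {α : Type*} (a b c : α) : ![a,b,c] (2:Fin 3) = c := rfl
lemma vec6_0 {α : Type*} (a b c d e f : α) : ![a,b,c,d,e,f] (0:Fin 6) = a := rfl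
lemma vec6_1 {α : Type*} (a b c d e f : α) : ![a,b,c,d,e,f] (1:Fin 6) = b := rfl
lemma vec6_2 {α : Type*} (a b c d e f : α) : ![a,b,c,d,e,f] (2:Fin 6) = c := rfl
lemma vec6_3 {α : Type*} (a b c d e f : α) : ![a,b,c,d,e,f] (3:Fin 6) = d := rfl
lemma vec6_4 {α : Type*} (a b c d e f : α) : ![a,b,c,d,e,f] (4:Fin 6) = e := rfl
lemma vec6_5 {α : Type*} (a b c d e f : α) : ![a,b,c,d,e,f] (5:Fin 6) = f := rfl

lemma ver_eq {F : Type*} [Field F] (v : Fin 6 → Fin 3 → F) :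
    Ver v = - Matrix.det (Matrix.of fun (i k : Fin 6) =>
      ![v i 0 ^ 2, v i 0 * v i 1, v i 1 ^ 2, v i 0 * v i 2, v i 1 * v i 2, v i 2 ^ 2] k) := by
  rw [det_fin_six']
  simp only [Ver, Δ3, Matrix.det_fin_three, Matrix.of_apply,
    vec3_0, vec3_1, vec3_2, vec6_0, vec6_1, vec6_2, vec6_3, vec6_4, vec6_5]
  ring

lemma dep3 {F : Type*} [Field F] (v : Fin 6 → Fin 3 → F) (a b c : Fin 6) (h : Δ3 v a b c = 0) :
    ∃ w : Fin 3 → F, w ≠ 0 ∧ (∑ j, v a j * w j) = 0 ∧ (∑ j, v b j * w j) = 0 ∧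
      (∑ j, v c j * w j) = 0 := by
  have hdet : (Matrix.of ![v a, v b, v c]).det = 0 := by
    have ht : (Matrix.of fun i j => ![v a, v b, v c] j i) = Matrix.transpose (Matrix.of ![v a, v b, v c]) := rfl
    rw [Δ3, ht, Matrix.det_transpose] at h
    exact h
  obtain ⟨w, hw, hmul⟩ := Matrix.exists_mulVec_eq_zero_iff.mpr hdet
  refine ⟨w, hw, ?_, ?_, ?_⟩
  · simpa [Matrix.mulVec, dotProduct] using congrFun hmul 0
  · simpa [Matrix.mulVec, dotProduct] using congrFun hmul 1
  · simpa [Matrix.mulVec, dotProduct] using congrFun hmul 2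

lemma cancel_aux {F : Type*} [Field F] {w0 w1 u0 u1 : F} (hw : w0 ≠ 0)
    (h0 : w0 * u0 = 0) (h1 : w0 * u1 + w1 * u0 = 0) : u1 = 0 := by
  have hu0 : u0 = 0 := (mul_eq_zero.mp h0).resolve_left hw
  have hz : w0 * u1 = 0 := by linear_combination h1 - w1 * hu0
  exact (mul_eq_zero.mp hz).resolve_left hw

lemma fin3_cases (j : Fin 3) : j = 0 ∨ j = 1 ∨ j = 2 := by fin_cases j <;> simp

/-- If the six points lie on a degenerate conic consisting of two lines with three points on
each (i.e., there is a partition `{a,b,c} ⊔ {d,e,f} = {1,…,6}` with `Δ_{abc} = Δ_{def} = 0`),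
then the Veronese polynomial vanishes. -/
theorem stmt6 {F : Type*} [Field F] (v : Fin 6 → Fin 3 → F)
    (h : ∃ a b c d e f : Fin 6, ({a, b, c, d, e, f} : Finset (Fin 6)) = Finset.univ ∧
      Δ3 v a b c = 0 ∧ Δ3 v d e f = 0) :
    Ver v = 0 := by
  obtain ⟨a, b, c, d, e, f, huniv, h1, h2⟩ := h
  obtain ⟨w, hw, hwa, hwb, hwc⟩ := dep3 v a b c h1
  obtain ⟨u, hu, hud, hue, huf⟩ := dep3 v d e f h2
  set q : Fin 6 → F := ![w 0 * u 0, w 0 * u 1 + w 1 * u 0, w 1 * u 1,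
    w 0 * u 2 + w 2 * u 0, w 1 * u 2 + w 2 * u 1, w 2 * u 2] with hqdef
  have hq : q ≠ 0 := by
    intro h0
    have e0 : w 0 * u 0 = 0 := by simpa only [hqdef, vec6_0, Pi.zero_apply] using congrFun h0 0
    have e1 : w 0 * u 1 + w 1 * u 0 = 0 := by simpa only [hqdef, vec6_1, Pi.zero_apply] using congrFun h0 1
    have e2 : w 1 * u 1 = 0 := by simpa only [hqdef, vec6_2, Pi.zero_apply] using congrFun h0 2
    have e3 : w 0 * u 2 + w 2 * u 0 = 0 := by simpa only [hqdef, vec6_3, Pi.zero_apply] using congrFun h0 3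
    have e4 : w 1 * u 2 + w 2 * u 1 = 0 := by simpa only [hqdef, vec6_4, Pi.zero_apply] using congrFun h0 4
    have e5 : w 2 * u 2 = 0 := by simpa only [hqdef, vec6_5, Pi.zero_apply] using congrFun h0 5
    obtain ⟨j, hj⟩ := Function.ne_iff.mp hw
    have hj' : w j ≠ 0 := by simpa using hj
    apply hu
    have hu012 : u 0 = 0 ∧ u 1 = 0 ∧ u 2 = 0 := by
      rcases fin3_cases j with rfl | rfl | rfl
      · exact ⟨(mul_eq_zero.mp e0).resolve_left hj', cancel_aux hj' e0 e1,
          cancel_aux hj' e0 e3⟩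
      · exact ⟨cancel_aux (w1 := w 0) hj' e2 (by linear_combination e1),
          (mul_eq_zero.mp e2).resolve_left hj', cancel_aux hj' e2 e4⟩
      · exact ⟨cancel_aux (w1 := w 0) hj' e5 (by linear_combination e3),
          cancel_aux (w1 := w 1) hj' e5 (by linear_combination e4),
          (mul_eq_zero.mp e5).resolve_left hj'⟩
    funext k
    show u k = 0
    rcases fin3_cases k with rfl | rfl | rfl
    · exact hu012.1
    · exact hu012.2.1
    · exact hu012.2.2
  have hzero : ∀ i : Fin 6, (∑ j, v i j * w j) * (∑ j, v i j * u j) = 0 := by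
    intro i
    have hi : i = a ∨ i = b ∨ i = c ∨ i = d ∨ i = e ∨ i = f := by
      have hmem := Finset.mem_univ i
      rw [← huniv] at hmem
      simpa using hmem
    rcases hi with rfl | rfl | rfl | rfl | rfl | rfl
    · rw [hwa, zero_mul]
    · rw [hwb, zero_mul]
    · rw [hwc, zero_mul]
    · rw [hud, mul_zero]
    · rw [hue, mul_zero]
    · rw [huf, mul_zero]
  have hker : (Matrix.of fun (i k : Fin 6) =>
      ![v i 0 ^ 2, v i 0 * v i 1, v i 1 ^ 2, v i 0 * v i 2, v i 1 * v i 2, v i 2 ^ 2] k).mulVec q = 0 := by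
    funext i
    have hz := hzero i
    simp only [Fin.sum_univ_three] at hz
    simp only [Matrix.mulVec, dotProduct, Fin.sum_univ_six, Matrix.of_apply, hqdef,
      vec6_0, vec6_1, vec6_2, vec6_3, vec6_4, vec6_5, Pi.zero_apply]
    linear_combination hz
  have hdet : (Matrix.of fun (i k : Fin 6) =>
      ![v i 0 ^ 2, v i 0 * v i 1, v i 1 ^ 2, v i 0 * v i 2, v i 1 * v i 2, v i 2 ^ 2] k).det = 0 :=
    Matrix.exists_mulVec_eq_zero_iff.mp ⟨q, hq, hker⟩
  rw [ver_eq, hdet, neg_zero]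
end

section
/- Let $F$ be a field and $v_1,\dots,v_6 \in F^3$ with $\Delta_{345} = 0$. Then the Veronese polynomial factorizes as $V = -\,\Delta_{126}\,\Delta_{145}\,\Delta_{234}\,\Delta_{356}$. (This expresses that the residue of the type III CEGM integrand $\mathcal{I}(\Sigma_{III}) = V/(\Delta_{123}\Delta_{125}\Delta_{136}\Delta_{145}\Delta_{146}\Delta_{234}\Delta_{246}\Delta_{256}\Delta_{345}\Delta_{356})$ at the pole $\Delta_{345}=0$ agrees, up to sign, with that of the type II integrand $\Delta_{126}/(\Delta_{125}\Delta_{123}\Delta_{146}\Delta_{136}\Delta_{246}\Delta_{256}\Delta_{345})$ obtained from it by a triangle flip.) -/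
/-- On the locus `Δ₃₄₅ = 0`, the Veronese polynomial factorizes as
`V = -Δ₁₂₆ Δ₁₄₅ Δ₂₃₄ Δ₃₅₆` (labels `1, …, 6` correspond to indices `0, …, 5`). -/
theorem stmt8 {F : Type*} [Field F] (v : Fin 6 → Fin 3 → F) (h : Δ3 v 2 3 4 = 0) :
    Ver v = -(Δ3 v 0 1 5 * Δ3 v 0 3 4 * Δ3 v 1 2 3 * Δ3 v 2 4 5) := by
  have h1 : Δ3 v 3 4 5 * Δ3 v 2 4 0 - Δ3 v 0 3 4 * Δ3 v 2 4 5
      = -(Δ3 v 2 3 4 * Δ3 v 4 5 0) := by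
    simp [Δ3, Matrix.det_fin_three]; ring
  have h2 : Δ3 v 5 0 1 = Δ3 v 0 1 5 := by
    simp [Δ3, Matrix.det_fin_three]; ring
  unfold Ver
  linear_combination
    (Δ3 v 0 1 2 * Δ3 v 4 5 0 * Δ3 v 1 3 5 + Δ3 v 1 2 3 * Δ3 v 0 1 5 * Δ3 v 4 5 0) * h
    + (-(Δ3 v 1 2 3 * Δ3 v 0 1 5)) * h1
    + (-(Δ3 v 1 2 3 * Δ3 v 3 4 5 * Δ3 v 2 4 0)) * h2
end

section
/- Let $F$ be a field and $v_1,\dots,v_5 \in F^3$ such that all $3\times 3$ determinants $\Delta_{abc} = \det(v_a,v_b,v_c)$ for distinct $a,b,c \in \{1,\dots,5\}$ are nonzero. Then the four-term $(3,5)$ decoupling identity holds: $\mathrm{PT}^{(3)}(1,2,3,4,5) + \mathrm{PT}^{(3)}(1,2,5,4,3) - \mathrm{PT}^{(3)}(1,3,2,5,4) + \mathrm{PT}^{(3)}(1,4,3,2,5) = 0$. (This is the $(3,5)$ analog of the four-term $U(1)$ decoupling identity.) -/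
/-- The `k = 3` Parke-Taylor factor
`PT^(3)(a₁,…,a₅) = (Δ_{a₁a₂a₃} Δ_{a₂a₃a₄} Δ_{a₃a₄a₅} Δ_{a₄a₅a₁} Δ_{a₅a₁a₂})⁻¹`. -/
noncomputable def PT3 {F : Type*} [Field F] (v : Fin 5 → Fin 3 → F)
    (a1 a2 a3 a4 a5 : Fin 5) : F :=
  (Δ3 v a1 a2 a3 * Δ3 v a2 a3 a4 * Δ3 v a3 a4 a5 * Δ3 v a4 a5 a1 * Δ3 v a5 a1 a2)⁻¹

section Brackets

variable {F : Type*} [Field F] {N : ℕ} (v : Fin N → Fin 3 → F)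

theorem Δ3_expand (a b c : Fin N) :
    Δ3 v a b c = v a 0 * v b 1 * v c 2 - v a 0 * v c 1 * v b 2 - v b 0 * v a 1 * v c 2
      + v b 0 * v c 1 * v a 2 + v c 0 * v a 1 * v b 2 - v c 0 * v b 1 * v a 2 := by
  simp [Δ3, Matrix.det_fin_three]

theorem Δ3_swap_left (a b c : Fin N) : Δ3 v b a c = -Δ3 v a b c := by
  simp only [Δ3_expand]; ring

theorem Δ3_swap_right (a b c : Fin N) : Δ3 v a c b = -Δ3 v a b c := by
  simp only [Δ3_expand]; ring

theorem Δ3_swap_outer (a b c : Fin N) : Δ3 v c b a = -Δ3 v a b c := by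
  rw [Δ3_swap_left, Δ3_swap_right, Δ3_swap_left, neg_neg]

theorem Δ3_rotate (a b c : Fin N) : Δ3 v b c a = Δ3 v a b c := by
  rw [Δ3_swap_right, Δ3_swap_left, neg_neg]

theorem Δ3_plucker (x a b c d : Fin N) :
    Δ3 v x a b * Δ3 v x c d - Δ3 v x a c * Δ3 v x b d + Δ3 v x a d * Δ3 v x b c = 0 := by
  simp only [Δ3_expand]; ring

end Brackets

theorem Δ3_decoupling_relation {F : Type*} [Field F] (v : Fin 5 → Fin 3 → F) :
    Δ3 v 0 2 3 * Δ3 v 1 2 4 * Δ3 v 1 3 4 =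
      Δ3 v 0 3 4 * Δ3 v 1 2 3 * Δ3 v 1 2 4 + Δ3 v 0 1 4 * Δ3 v 1 2 3 * Δ3 v 2 3 4 +
      Δ3 v 0 1 2 * Δ3 v 1 3 4 * Δ3 v 2 3 4 := by
  have h₃ := Δ3_plucker v 3 0 1 2 4
  have h₁ := Δ3_plucker v 1 0 2 3 4
  rw [← Δ3_rotate v 3 0 1, Δ3_swap_left v 2 3 4, ← Δ3_rotate v 3 0 2, Δ3_swap_left v 1 3 4,
    Δ3_swap_left v 0 3 4, ← Δ3_rotate v 3 1 2] at h₃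
  rw [Δ3_swap_left v 0 1 2, Δ3_swap_left v 0 1 3, Δ3_swap_left v 0 1 4] at h₁
  linear_combination Δ3 v 1 2 4 * h₃ + Δ3 v 2 3 4 * h₁

-- The labels `1, …, 5` of the informal statement are `0, …, 4` here.
/-- The four-term `(3,5)` decoupling identity (labels `1, …, 5` correspond to `0, …, 4`):
`PT(1,2,3,4,5) + PT(1,2,5,4,3) - PT(1,3,2,5,4) + PT(1,4,3,2,5) = 0`. -/
theorem stmt10 {F : Type*} [Field F] (v : Fin 5 → Fin 3 → F)
    (hΔ : ∀ a b c : Fin 5, a ≠ b → a ≠ c → b ≠ c → Δ3 v a b c ≠ 0) :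
    PT3 v 0 1 2 3 4 + PT3 v 0 1 4 3 2 - PT3 v 0 2 1 4 3 + PT3 v 0 3 2 1 4 = 0 := by
  have h012 := hΔ 0 1 2 (by decide) (by decide) (by decide)
  have h014 := hΔ 0 1 4 (by decide) (by decide) (by decide)
  have h023 := hΔ 0 2 3 (by decide) (by decide) (by decide)
  have h034 := hΔ 0 3 4 (by decide) (by decide) (by decide)
  have h123 := hΔ 1 2 3 (by decide) (by decide) (by decide)
  have h124 := hΔ 1 2 4 (by decide) (by decide) (by decide)
  have h134 := hΔ 1 3 4 (by decide) (by decide) (by decide)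
  have h234 := hΔ 2 3 4 (by decide) (by decide) (by decide)
  simp only [PT3]
  rw [Δ3_rotate v 0 3 4, ← Δ3_rotate v 4 0 1, Δ3_swap_right v 1 3 4, Δ3_swap_outer v 2 3 4,
    Δ3_swap_outer v 0 2 3, ← Δ3_rotate v 2 0 1, Δ3_swap_right v 0 1 2, Δ3_swap_left v 1 2 4,
    Δ3_swap_outer v 0 3 4, ← Δ3_rotate v 3 0 2, Δ3_swap_right v 0 2 3, Δ3_swap_outer v 1 2 3,
    Δ3_rotate v 0 1 4, ← Δ3_rotate v 4 0 3]
  field_simp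
  linear_combination Δ3_decoupling_relation v
end

section
/- Let $F$ be a field and $v_1,\dots,v_6 \in F^3$ such that all $3\times 3$ determinants $\Delta_{abc} = \det(v_a,v_b,v_c)$ for distinct $a,b,c \in \{1,\dots,6\}$ are nonzero. Then the seven-term $(3,6)$ irreducible decoupling identity holds: $-\dfrac{1}{\Delta_{123}\Delta_{146}\Delta_{156}\Delta_{234}\Delta_{256}\Delta_{345}} - \dfrac{\Delta_{235}}{\Delta_{123}\Delta_{125}\Delta_{146}\Delta_{234}\Delta_{256}\Delta_{345}\Delta_{356}} - \dfrac{1}{\Delta_{123}\Delta_{125}\Delta_{146}\Delta_{234}\Delta_{356}\Delta_{456}} + \dfrac{1}{\Delta_{123}\Delta_{125}\Delta_{156}\Delta_{234}\Delta_{346}\Delta_{456}} + \dfrac{1}{\Delta_{123}\Delta_{125}\Delta_{156}\Delta_{246}\Delta_{345}\Delta_{346}} + \dfrac{\Delta_{126}}{\Delta_{123}\Delta_{125}\Delta_{146}\Delta_{156}\Delta_{236}\Delta_{246}\Delta_{345}} + \dfrac{1}{\Delta_{125}\Delta_{146}\Delta_{156}\Delta_{234}\Delta_{236}\Delta_{345}}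 = 0$. -/
section Plucker

variable {F : Type*} [Field F] {N : ℕ} (v : Fin N → Fin 3 → F)

theorem Δ3_apply (a b c : Fin N) :
    Δ3 v a b c = v a 0 * (v b 1 * v c 2 - v c 1 * v b 2) - v b 0 * (v a 1 * v c 2 - v c 1 * v a 2)
      + v c 0 * (v a 1 * v b 2 - v b 1 * v a 2) := by
  simp only [Δ3, Matrix.det_fin_three, Matrix.of_apply, Matrix.cons_val', Matrix.cons_val_fin_one,
    Matrix.cons_val_zero, Matrix.cons_val_one, Matrix.cons_val]
  ring

/- The three-term Plücker relation with common index `x`, written with `x` in second, third or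
fourth place among `a < b < c < d`, so that every determinant has increasing indices. -/

theorem Δ3_plucker_second (a x b c d : Fin N) :
    Δ3 v a x b * Δ3 v x c d - Δ3 v a x c * Δ3 v x b d + Δ3 v a x d * Δ3 v x b c = 0 := by
  simp only [Δ3_apply]
  ring

theorem Δ3_plucker_third (a b x c d : Fin N) :
    Δ3 v a b x * Δ3 v x c d - Δ3 v a x c * Δ3 v b x d + Δ3 v a x d * Δ3 v b x c = 0 := by
  simp only [Δ3_apply]
  ring

theorem Δ3_plucker_fourth (a b c x d : Fin N) :
    Δ3 v a b x * Δ3 v c x d - Δ3 v a c x * Δ3 v b x d + Δ3 v a x d * Δ3 v b c x = 0 := by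
  simp only [Δ3_apply]
  ring

end Plucker

-- The labels `1, …, 6` of the informal statement are the indices `0, …, 5`.
/-- The seven-term `(3,6)` irreducible decoupling identity
(labels `1, …, 6` correspond to indices `0, …, 5`):
`-1/(Δ₁₂₃Δ₁₄₆Δ₁₅₆Δ₂₃₄Δ₂₅₆Δ₃₄₅) - Δ₂₃₅/(Δ₁₂₃Δ₁₂₅Δ₁₄₆Δ₂₃₄Δ₂₅₆Δ₃₄₅Δ₃₅₆)
 - 1/(Δ₁₂₃Δ₁₂₅Δ₁₄₆Δ₂₃₄Δ₃₅₆Δ₄₅₆) + 1/(Δ₁₂₃Δ₁₂₅Δ₁₅₆Δ₂₃₄Δ₃₄₆Δ₄₅₆)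
 + 1/(Δ₁₂₃Δ₁₂₅Δ₁₅₆Δ₂₄₆Δ₃₄₅Δ₃₄₆) + Δ₁₂₆/(Δ₁₂₃Δ₁₂₅Δ₁₄₆Δ₁₅₆Δ₂₃₆Δ₂₄₆Δ₃₄₅)
 + 1/(Δ₁₂₅Δ₁₄₆Δ₁₅₆Δ₂₃₄Δ₂₃₆Δ₃₄₅) = 0`. -/
theorem stmt12 {F : Type*} [Field F] (v : Fin 6 → Fin 3 → F)
    (hΔ : ∀ a b c : Fin 6, a ≠ b → a ≠ c → b ≠ c → Δ3 v a b c ≠ 0) :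
    -(Δ3 v 0 1 2 * Δ3 v 0 3 5 * Δ3 v 0 4 5 * Δ3 v 1 2 3 * Δ3 v 1 4 5 * Δ3 v 2 3 4)⁻¹
      - Δ3 v 1 2 4 * (Δ3 v 0 1 2 * Δ3 v 0 1 4 * Δ3 v 0 3 5 * Δ3 v 1 2 3 * Δ3 v 1 4 5 *
          Δ3 v 2 3 4 * Δ3 v 2 4 5)⁻¹
      - (Δ3 v 0 1 2 * Δ3 v 0 1 4 * Δ3 v 0 3 5 * Δ3 v 1 2 3 * Δ3 v 2 4 5 * Δ3 v 3 4 5)⁻¹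
      + (Δ3 v 0 1 2 * Δ3 v 0 1 4 * Δ3 v 0 4 5 * Δ3 v 1 2 3 * Δ3 v 2 3 5 * Δ3 v 3 4 5)⁻¹
      + (Δ3 v 0 1 2 * Δ3 v 0 1 4 * Δ3 v 0 4 5 * Δ3 v 1 3 5 * Δ3 v 2 3 4 * Δ3 v 2 3 5)⁻¹
      + Δ3 v 0 1 5 * (Δ3 v 0 1 2 * Δ3 v 0 1 4 * Δ3 v 0 3 5 * Δ3 v 0 4 5 * Δ3 v 1 2 5 *
          Δ3 v 1 3 5 * Δ3 v 2 3 4)⁻¹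
      + (Δ3 v 0 1 4 * Δ3 v 0 3 5 * Δ3 v 0 4 5 * Δ3 v 1 2 3 * Δ3 v 1 2 5 * Δ3 v 2 3 4)⁻¹
      = 0 := by
  have r₁ := Δ3_plucker_fourth v 0 1 2 4 5
  have r₂ := Δ3_plucker_fourth v 0 2 3 4 5
  have r₃ := Δ3_plucker_third v 0 2 3 4 5
  have r₄ := Δ3_plucker_fourth v 0 1 2 3 5
  have r₅ := Δ3_plucker_second v 0 1 2 3 5
  linear_combination (norm := skip)
    (-r₁ / (Δ3 v 1 4 5 * Δ3 v 2 4 5) - r₂ / (Δ3 v 2 4 5 * Δ3 v 3 4 5)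
      + r₃ / (Δ3 v 2 3 5 * Δ3 v 3 4 5) + r₄ / (Δ3 v 1 3 5 * Δ3 v 2 3 5)
      + r₅ / (Δ3 v 1 2 5 * Δ3 v 1 3 5)) /
    (Δ3 v 0 1 2 * Δ3 v 0 1 4 * Δ3 v 0 3 5 * Δ3 v 0 4 5 * Δ3 v 1 2 3 * Δ3 v 2 3 4)
  field_simp (disch := exact hΔ _ _ _ (by decide) (by decide) (by decide))
  ring
end
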